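/- arXiv:2201.10826 — 8 statements merged into one kernel-verified Lean document; each statement's English description precedes it below -/
import Mathlib

section
/- Under the nonseparable duration model, assume in addition that U is unit exponential and that U and W are independent. Then for every u ≥ 0 and every w ∈ ℝ: P(T ≤ φ₀(u) and Z > T and W ≤ w) + P(T ≤ φ₁(Z,u) and Z ≤ T and W ≤ w) = (1 − exp(−u)) · P(W ≤ w). (Paper's Theorem 3.1, the identification equation F₀(φ₀(u),w) + F₁(φ₁(·,u),w) = (1 − e^{−u})F_W(w).) -/
open MeasureTheory ProbabilityTheory Set

/-- Paper's Theorem 3.1: the identification equation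
`F₀(φ₀(u),w) + F₁(φ₁(·,u),w) = (1 − e^{−u}) F_W(w)`. -/
theorem identification_equation
    {Ω : Type*} [MeasureSpace Ω] [IsProbabilityMeasure (ℙ : Measure Ω)]
    (T Z U W : Ω → ℝ)
    (hT : Measurable T) (hZ : Measurable Z) (hU : Measurable U) (hW : Measurable W)
    (hTnn : ∀ ω, 0 ≤ T ω) (hZnn : ∀ ω, 0 ≤ Z ω) (hUnn : ∀ ω, 0 ≤ U ω)
    (φ0 φ0inv : ℝ → ℝ) (φ1 : ℝ → ℝ → ℝ)
    (hφ0mono : StrictMonoOn φ0 (Set.Ici 0))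
    (hφ0nn : ∀ u, 0 ≤ u → 0 ≤ φ0 u)
    (hφ0invnn : ∀ t, 0 ≤ t → 0 ≤ φ0inv t)
    (hφ0inv1 : ∀ u, 0 ≤ u → φ0inv (φ0 u) = u)
    (hφ0inv2 : ∀ t, 0 ≤ t → φ0 (φ0inv t) = t)
    (hφ1meas : Measurable fun p : ℝ × ℝ => φ1 p.1 p.2)
    (hφ1nn : ∀ z u, 0 ≤ z → 0 ≤ u → 0 ≤ φ1 z u)
    (hφ1mono : ∀ z, 0 ≤ z → StrictMonoOn (φ1 z) (Set.Ici 0))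
    (hφ1fix : ∀ z, 0 ≤ z → φ1 z (φ0inv z) = z)
    (hmodel : ∀ᵐ ω ∂ℙ, (φ0 (U ω) < Z ω → T ω = φ0 (U ω)) ∧
      (Z ω ≤ φ0 (U ω) → T ω = φ1 (Z ω) (U ω)))
    (hUexp : ∀ u, 0 ≤ u → ℙ {ω | U ω ≤ u} = ENNReal.ofReal (1 - Real.exp (-u)))
    (hUW : IndepFun U W ℙ) :
    ∀ u, 0 ≤ u → ∀ w : ℝ,
      (ℙ {ω | T ω ≤ φ0 u ∧ T ω < Z ω ∧ W ω ≤ w}).toReal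
        + (ℙ {ω | T ω ≤ φ1 (Z ω) u ∧ Z ω ≤ T ω ∧ W ω ≤ w}).toReal
      = (1 - Real.exp (-u)) * (ℙ {ω | W ω ≤ w}).toReal := by
  intro u hu w
  set A1 : Set Ω := {ω | U ω ≤ u ∧ W ω ≤ w ∧ T ω < Z ω} with hA1
  set A2 : Set Ω := {ω | U ω ≤ u ∧ W ω ≤ w ∧ Z ω ≤ T ω} with hA2
  have key : ∀ ω, ((φ0 (U ω) < Z ω → T ω = φ0 (U ω)) ∧
      (Z ω ≤ φ0 (U ω) → T ω = φ1 (Z ω) (U ω))) →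
      ((T ω ≤ φ0 u ∧ T ω < Z ω ∧ W ω ≤ w) ↔ ω ∈ A1) ∧
      ((T ω ≤ φ1 (Z ω) u ∧ Z ω ≤ T ω ∧ W ω ≤ w) ↔ ω ∈ A2) := by
    intro ω hω
    rcases lt_or_ge (φ0 (U ω)) (Z ω) with h | h
    · have hT' : T ω = φ0 (U ω) := hω.1 h
      constructor
      · rw [mem_setOf_eq, hT', hφ0mono.le_iff_le (hUnn ω) hu]
        tauto
      · rw [mem_setOf_eq, hT']
        have : ¬ Z ω ≤ φ0 (U ω) := not_le.2 h
        tauto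
    · have hT' : T ω = φ1 (Z ω) (U ω) := hω.2 h
      have hZle : Z ω ≤ T ω := by
        have h1 : φ0inv (Z ω) ≤ U ω := by
          have := (hφ0mono.le_iff_le (hφ0invnn _ (hZnn ω)) (hUnn ω)).1
          rw [hφ0inv2 _ (hZnn ω)] at this
          exact this h
        have h2 : φ1 (Z ω) (φ0inv (Z ω)) ≤ φ1 (Z ω) (U ω) :=
          (hφ1mono _ (hZnn ω)).monotoneOn (hφ0invnn _ (hZnn ω)) (hUnn ω) h1
        rw [hφ1fix _ (hZnn ω)] at h2
        rw [hT']; exact h2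
      have hnlt : ¬ T ω < Z ω := not_lt.2 hZle
      constructor
      · rw [mem_setOf_eq]; tauto
      · rw [mem_setOf_eq, hT', (hφ1mono _ (hZnn ω)).le_iff_le (hUnn ω) hu]
        rw [hT'] at hZle
        tauto
  have hE1 : ℙ {ω | T ω ≤ φ0 u ∧ T ω < Z ω ∧ W ω ≤ w} = ℙ A1 := by
    refine measure_congr (Filter.eventuallyEq_set.2 ?_)
    filter_upwards [hmodel] with ω hω
    exact (key ω hω).1
  have hE2 : ℙ {ω | T ω ≤ φ1 (Z ω) u ∧ Z ω ≤ T ω ∧ W ω ≤ w} = ℙ A2 := by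
    refine measure_congr (Filter.eventuallyEq_set.2 ?_)
    filter_upwards [hmodel] with ω hω
    exact (key ω hω).2
  have hA2m : MeasurableSet A2 := by
    have : A2 = (U ⁻¹' Iic u) ∩ ((W ⁻¹' Iic w) ∩ {ω | Z ω ≤ T ω}) := by
      ext ω; simp [hA2, and_assoc]
    rw [this]
    exact (hU measurableSet_Iic).inter ((hW measurableSet_Iic).inter
      (measurableSet_le hZ hT))
  have hdisj : Disjoint A1 A2 := by
    rw [Set.disjoint_left]
    rintro ω ⟨_, _, h1⟩ ⟨_, _, h2⟩
    exact absurd h2 (not_le.2 h1)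
  have hunion : A1 ∪ A2 = (U ⁻¹' Iic u) ∩ (W ⁻¹' Iic w) := by
    ext ω
    simp only [hA1, hA2, mem_union, mem_setOf_eq, mem_inter_iff, mem_preimage, mem_Iic]
    rcases lt_or_ge (T ω) (Z ω) with h | h <;> tauto
  have hsum : ℙ A1 + ℙ A2 = ENNReal.ofReal (1 - Real.exp (-u)) * ℙ {ω | W ω ≤ w} := by
    rw [← measure_union hdisj hA2m, hunion,
      hUW.measure_inter_preimage_eq_mul _ _ measurableSet_Iic measurableSet_Iic]
    congr 1
    · exact hUexp u hu
  have hexp : 0 ≤ 1 - Real.exp (-u) := by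
    have : Real.exp (-u) ≤ 1 := Real.exp_le_one_iff.2 (neg_nonpos.2 hu)
    linarith
  rw [hE1, hE2, ← ENNReal.toReal_add (measure_ne_top _ _) (measure_ne_top _ _), hsum,
    ENNReal.toReal_mul, ENNReal.toReal_ofReal hexp]
end

section
/- Global identification (paper's Theorem 3.3): under all the listed assumptions, if (ψ₀, ψ₁) ∈ 𝒫 satisfies, for every w ∈ ℝ, P(T ≤ ψ₀ and Z > T and W ≤ w) + P(T ≤ ψ₁(Z) and Z ≤ T and W ≤ w) = (1 − exp(−u)) · P(W ≤ w), then almost surely ψ₀·1{Z > ψ₀} + ψ₁(Z)·1{Z ≤ ψ₀} = s*·1{Z > s*} + g*(Z)·1{Z ≤ s*}; that is, the induced regression function of ψ equals φ(·,u) evaluated at Z almost surely. -/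
/-!
At the truth, `T ≤ φ(Z, u)` holds exactly when `U ≤ u`, so by independence of `U` and `W` the pair
`(φ₀(u), φ₁(·, u))` solves the identification equation. Subtracting the two equations and writing
each probability through the conditional densities of `ε`, the product `Δ(Z, D) · ω_Δ(Z, D, W)` for
`Δ = ψ - φ(·, u)` (after the substitution `e = δ Δ`) integrates to zero over every `{W ≤ w}`; these
sets generate `σ(W)`, so its conditional expectation given `W` vanishes. Completeness gives
`Δ₀ (1 - D) + Δ₁(Z) D = 0` a.s., hence `Δ₀ = 0` since `P(D = 0) > 0`, and `Δ₁(Z) = 0` on `{D = 1}`;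
the bound `f_Z ≤ K f_{Z|D=1}` below `s*` carries the latter over to `{Z ≤ s*}`.
-/

open MeasureTheory ProbabilityTheory Set Filter Topology Function

lemma abs_indicator_one_le_one {β : Type*} (s : Set β) (x : β) :
    |s.indicator (1 : β → ℝ) x| ≤ 1 := by
  by_cases hx : x ∈ s <;> simp [hx]

lemma exists_abs_sub_le {β : Type*} {a b : β → ℝ} (ha : ∃ M, ∀ x, |a x| ≤ M)
    (hb : ∃ M, ∀ x, |b x| ≤ M) : ∃ M, ∀ x, |a x - b x| ≤ M :=
  let ⟨M, hM⟩ := ha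
  let ⟨N, hN⟩ := hb
  ⟨M + N, fun x => (abs_sub _ _).trans (add_le_add (hM x) (hN x))⟩

section WeightedCondDensity

variable {Ω α : Type*} [MeasurableSpace Ω] [MeasurableSpace α]

/-- The paper's conditional-density assumption: `f (·, x)` is a density of `ε` given `X = x` on
the subpopulation weighted by `ρ`, tested against bounded functions. Where `f (·, x)` is not
integrable on `Iic c` the inner integral is the junk value `0`; `ae_integrableOn_Iic` shows this
does not happen where the weight is positive. -/
abbrev CondDensityIdentity (μ : Measure Ω) (X : Ω → α) (ρ ε : Ω → ℝ) (f : ℝ → α → ℝ) : Prop :=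
  ∀ ℓ h : α → ℝ, Measurable ℓ → (∃ M, ∀ x, |ℓ x| ≤ M) → Measurable h → (∃ M, ∀ x, |h x| ≤ M) →
    ∫ ω, (if ε ω ≤ ℓ (X ω) then (1:ℝ) else 0) * ρ ω * h (X ω) ∂μ
      = ∫ ω, ρ ω * h (X ω) * (∫ e in Iic (ℓ (X ω)), f e (X ω)) ∂μ

structure HasWeightedCondDensity (μ : Measure Ω) (X : Ω → α) (ρ ε : Ω → ℝ) (f : ℝ → α → ℝ) :
    Prop where
  integral_eq : CondDensityIdentity μ X ρ ε f
  measurable_X : Measurable X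
  measurable_ρ : Measurable ρ
  ρ_mem_Icc : ∀ ω, ρ ω ∈ Icc 0 1
  measurable_ε : Measurable ε
  measurable_f : Measurable (uncurry f)
  f_nonneg : ∀ e x, 0 ≤ f e x

lemma measurable_setIntegral_Iic {f : ℝ → α → ℝ} (hf : Measurable (uncurry f)) {ℓ : α → ℝ}
    (hℓ : Measurable ℓ) : Measurable fun x => ∫ e in Iic (ℓ x), f e x := by
  have h : Measurable fun p : α × ℝ => {q : α × ℝ | q.2 ≤ ℓ q.1}.indicator (fun q => f q.2 q.1) p :=
    (hf.comp measurable_swap).indicator (measurableSet_le measurable_snd (hℓ.comp measurable_fst))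
  convert (h.stronglyMeasurable.integral_prod_right' (ν := volume)).measurable using 2 with x
  rw [← integral_indicator measurableSet_Iic]
  rfl

lemma tendsto_integral_ite_le_mul_atTop {μ : Measure Ω} {ε g : Ω → ℝ} (hε : Measurable ε)
    (hg : Integrable g μ) :
    Tendsto (fun c : ℝ => ∫ ω, (if ε ω ≤ c then (1:ℝ) else 0) * g ω ∂μ) atTop
      (𝓝 (∫ ω, g ω ∂μ)) := by
  refine tendsto_integral_filter_of_dominated_convergence (fun ω => ‖g ω‖) ?_ ?_ hg.norm ?_
  · exact Eventually.of_forall fun c =>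
      (Measurable.ite (measurableSet_le hε measurable_const) measurable_const
        measurable_const).aestronglyMeasurable.mul hg.aestronglyMeasurable
  · exact Eventually.of_forall fun c => Eventually.of_forall fun ω => by split_ifs <;> simp
  · exact Eventually.of_forall fun ω => tendsto_const_nhds.congr'
      ((eventually_ge_atTop (ε ω)).mono fun c hc => by simp [hc])

lemma setIntegral_preimage_eq_integral_mul_indicator {β : Type*} [MeasurableSpace β]
    {μ : Measure Ω} {W : Ω → β} (hW : Measurable W) {s : Set β} (hs : MeasurableSet s)
    (ρ I : Ω → ℝ) :
    ∫ ω in W ⁻¹' s, ρ ω * I ω ∂μ = ∫ ω, ρ ω * s.indicator 1 (W ω) * I ω ∂μ := by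
  rw [← integral_indicator (hW hs)]
  congr 1 with ω
  by_cases h : W ω ∈ s <;> simp [h]

lemma integrable_mul_comp_of_mem_Icc {μ : Measure Ω} [IsFiniteMeasure μ] {X : Ω → α}
    {ρ : Ω → ℝ} (hX : Measurable X) (hρ : Measurable ρ) (hρ01 : ∀ ω, ρ ω ∈ Icc 0 1)
    {h : α → ℝ} (hh : Measurable h) {M : ℝ} (hM : ∀ x, |h x| ≤ M) :
    Integrable (fun ω => ρ ω * h (X ω)) μ := by
  refine .of_bound (hρ.mul (hh.comp hX)).aestronglyMeasurable M (ae_of_all _ fun ω => ?_)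
  rw [Real.norm_eq_abs, abs_mul, abs_of_nonneg (hρ01 ω).1]
  exact (mul_le_of_le_one_left (abs_nonneg _) (hρ01 ω).2).trans (hM _)

namespace HasWeightedCondDensity

variable {μ : Measure Ω} [IsFiniteMeasure μ] {X : Ω → α} {ρ ε : Ω → ℝ} {f : ℝ → α → ℝ}
  (hd : HasWeightedCondDensity μ X ρ ε f)
include hd

lemma ae_integrableOn_Iic :
    ∀ᵐ ω ∂μ, ρ ω ≠ 0 → ∀ c, IntegrableOn (fun e => f e (X ω)) (Iic c) := by
  have hn : ∀ n : ℕ, ∀ᵐ ω ∂μ, ρ ω ≠ 0 → IntegrableOn (fun e => f e (X ω)) (Iic (n:ℝ)) := by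
    intro n
    set B := {x | ¬ IntegrableOn (fun e => f e x) (Iic (n:ℝ))}
    have hB : MeasurableSet B := (measurableSet_integrable (f := fun x e => f e x)
      (hd.measurable_f.comp measurable_swap).stronglyMeasurable).compl
    have hint := integrable_mul_comp_of_mem_Icc (μ := μ) hd.measurable_X hd.measurable_ρ
      hd.ρ_mem_Icc (measurable_one.indicator hB) (abs_indicator_one_le_one B)
    -- beyond `n`, the junk value makes the tested identity vanish on `B`
    have hvanish : ∀ c ≥ (n:ℝ),
        ∫ ω, (if ε ω ≤ c then (1:ℝ) else 0) * (ρ ω * B.indicator 1 (X ω)) ∂μ = 0 := by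
      intro c hc
      simp_rw [← mul_assoc]
      rw [hd.integral_eq (fun _ => c) (B.indicator 1) measurable_const ⟨|c|, fun _ => le_rfl⟩
        (measurable_one.indicator hB) ⟨1, abs_indicator_one_le_one B⟩]
      refine integral_eq_zero_of_ae (Eventually.of_forall fun ω => ?_)
      dsimp only [Pi.zero_apply]
      by_cases hx : X ω ∈ B
      · exact mul_eq_zero_of_right _ (integral_undef fun h =>
          hx (IntegrableOn.mono_set h (Iic_subset_Iic.2 hc)))
      · simp [hx]
    have hzero : ∫ ω, ρ ω * B.indicator 1 (X ω) ∂μ = 0 :=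
      tendsto_nhds_unique (tendsto_integral_ite_le_mul_atTop hd.measurable_ε hint)
        (tendsto_const_nhds.congr' ((eventually_ge_atTop _).mono fun c hc => (hvanish c hc).symm))
    have hnn : 0 ≤ᵐ[μ] fun ω => ρ ω * B.indicator 1 (X ω) := ae_of_all _ fun ω =>
      mul_nonneg (hd.ρ_mem_Icc ω).1 (indicator_nonneg (fun _ _ => zero_le_one) _)
    filter_upwards [(integral_eq_zero_iff_of_nonneg_ae hnn hint).1 hzero] with ω hω hρω
    by_contra hx
    simp [indicator_of_mem (show X ω ∈ B from hx), hρω] at hω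
  filter_upwards [ae_all_iff.2 hn] with ω hω hρω c
  obtain ⟨n, hcn⟩ := exists_nat_ge c
  exact (hω n hρω).mono_set (Iic_subset_Iic.2 hcn)

omit [IsFiniteMeasure μ] in
lemma setIntegral_Iic_nonneg (c : ℝ) (x : α) : 0 ≤ ∫ e in Iic c, f e x :=
  setIntegral_nonneg measurableSet_Iic fun e _ => hd.f_nonneg e x

lemma abs_integral_ite_mul_le (ℓ : α → ℝ) {h : α → ℝ} (hh : ∀ x, |h x| ≤ 1) :
    |∫ ω, (if ε ω ≤ ℓ (X ω) then (1:ℝ) else 0) * ρ ω * h (X ω) ∂μ| ≤ μ.real univ := by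
  rw [← Real.norm_eq_abs]
  refine (norm_integral_le_of_norm_le_const (C := 1) (ae_of_all _ fun ω => ?_)).trans_eq
    (one_mul _)
  rw [norm_mul, norm_mul]
  refine mul_le_one₀ (mul_le_one₀ ?_ (norm_nonneg _) ?_) (norm_nonneg _) (hh _)
  · split_ifs <;> simp
  · rw [Real.norm_eq_abs, abs_of_nonneg (hd.ρ_mem_Icc ω).1]
    exact (hd.ρ_mem_Icc ω).2

lemma setLIntegral_preimage_le {ℓ : α → ℝ} (hℓ : Measurable ℓ) (hℓb : ∃ M, ∀ x, |ℓ x| ≤ M)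
    {A : Set α} (hA : MeasurableSet A) {C : ℝ} (hAC : ∀ x ∈ A, ∫ e in Iic (ℓ x), f e x ≤ C) :
    ∫⁻ ω in X ⁻¹' A, ENNReal.ofReal (ρ ω * ∫ e in Iic (ℓ (X ω)), f e (X ω)) ∂μ
      ≤ ENNReal.ofReal (μ.real univ) := by
  have hXA := hd.measurable_X hA
  have hint : IntegrableOn (fun ω => ρ ω * ∫ e in Iic (ℓ (X ω)), f e (X ω)) (X ⁻¹' A) μ := by
    refine .of_bound (measure_lt_top _ _) (hd.measurable_ρ.mul
      ((measurable_setIntegral_Iic hd.measurable_f hℓ).comp hd.measurable_X)).aestronglyMeasurable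
      C ((ae_restrict_iff' hXA).2 (ae_of_all _ fun ω hω => ?_))
    rw [Real.norm_eq_abs,
      abs_of_nonneg (mul_nonneg (hd.ρ_mem_Icc ω).1 (hd.setIntegral_Iic_nonneg _ _))]
    exact (mul_le_of_le_one_left (hd.setIntegral_Iic_nonneg _ _) (hd.ρ_mem_Icc ω).2).trans
      (hAC _ hω)
  have hset : ∫ ω in X ⁻¹' A, ρ ω * (∫ e in Iic (ℓ (X ω)), f e (X ω)) ∂μ
      = ∫ ω, ρ ω * A.indicator 1 (X ω) * (∫ e in Iic (ℓ (X ω)), f e (X ω)) ∂μ := by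
    rw [← integral_indicator hXA]
    congr 1 with ω
    by_cases hω : X ω ∈ A <;> simp [hω]
  rw [← ofReal_integral_eq_lintegral_ofReal hint (ae_of_all _ fun ω =>
      mul_nonneg (hd.ρ_mem_Icc ω).1 (hd.setIntegral_Iic_nonneg _ _)), hset,
    ← hd.integral_eq ℓ (A.indicator 1) hℓ hℓb (measurable_one.indicator hA)
      ⟨1, abs_indicator_one_le_one A⟩]
  exact ENNReal.ofReal_le_ofReal
    ((le_abs_self _).trans (hd.abs_integral_ite_mul_le ℓ (abs_indicator_one_le_one A)))

lemma integrable_mul_setIntegral_Iic {ℓ : α → ℝ} (hℓ : Measurable ℓ)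
    (hℓb : ∃ M, ∀ x, |ℓ x| ≤ M) :
    Integrable (fun ω => ρ ω * ∫ e in Iic (ℓ (X ω)), f e (X ω)) μ := by
  have hF := measurable_setIntegral_Iic hd.measurable_f hℓ
  have hg0 : 0 ≤ᵐ[μ] fun ω => ρ ω * ∫ e in Iic (ℓ (X ω)), f e (X ω) :=
    ae_of_all _ fun ω => mul_nonneg (hd.ρ_mem_Icc ω).1 (hd.setIntegral_Iic_nonneg _ _)
  -- exhaust by the level sets `A n`, on which the tested identity bounds the integral
  set A : ℕ → Set α := fun n => {x | ∫ e in Iic (ℓ x), f e x ≤ n}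
  have hcover : ⋃ n, X ⁻¹' A n = univ :=
    eq_univ_of_forall fun ω => mem_iUnion.2 (exists_nat_ge (∫ e in Iic (ℓ (X ω)), f e (X ω)))
  have hmono : Monotone fun n => X ⁻¹' A n :=
    fun m n hmn ω (hω : _ ≤ (m:ℝ)) => hω.trans (Nat.cast_le.2 hmn)
  refine ⟨(hd.measurable_ρ.mul (hF.comp hd.measurable_X)).aestronglyMeasurable, ?_⟩
  rw [hasFiniteIntegral_iff_ofReal hg0, ← setLIntegral_univ, ← hcover,
    setLIntegral_iUnion_of_directed _ hmono.directed_le]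
  exact (iSup_le fun n => hd.setLIntegral_preimage_le hℓ hℓb
    (measurableSet_le hF measurable_const) fun _ hx => hx).trans_lt ENNReal.ofReal_lt_top

lemma ae_mul_intervalIntegral_eq (ℓ : α → ℝ) :
    ∀ᵐ ω ∂μ, ρ ω * ∫ e in (0:ℝ)..ℓ (X ω), f e (X ω)
      = ρ ω * (∫ e in Iic (ℓ (X ω)), f e (X ω)) - ρ ω * ∫ e in Iic 0, f e (X ω) := by
  filter_upwards [hd.ae_integrableOn_Iic] with ω hω
  by_cases hρω : ρ ω = 0
  · simp [hρω]
  · rw [← mul_sub, intervalIntegral.integral_Iic_sub_Iic (hω hρω 0) (hω hρω _)]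

lemma integrable_mul_intervalIntegral {ℓ : α → ℝ} (hℓ : Measurable ℓ)
    (hℓb : ∃ M, ∀ x, |ℓ x| ≤ M) :
    Integrable (fun ω => ρ ω * ∫ e in (0:ℝ)..ℓ (X ω), f e (X ω)) μ :=
  ((hd.integrable_mul_setIntegral_Iic hℓ hℓb).sub
    (hd.integrable_mul_setIntegral_Iic measurable_const ⟨0, by simp⟩)).congr
    ((hd.ae_mul_intervalIntegral_eq ℓ).mono fun _ h => h.symm)

lemma integral_ite_sub_integral_ite {ℓ h : α → ℝ} (hℓ : Measurable ℓ)
    (hℓb : ∃ M, ∀ x, |ℓ x| ≤ M) (hh : Measurable h) (hhb : ∃ M, ∀ x, |h x| ≤ M) :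
    ∫ ω, (if ε ω ≤ ℓ (X ω) then (1:ℝ) else 0) * ρ ω * h (X ω) ∂μ
        - ∫ ω, (if ε ω ≤ 0 then (1:ℝ) else 0) * ρ ω * h (X ω) ∂μ
      = ∫ ω, ρ ω * h (X ω) * (∫ e in (0:ℝ)..ℓ (X ω), f e (X ω)) ∂μ := by
  obtain ⟨M, hM⟩ := hhb
  have hint : ∀ ℓ' : α → ℝ, Measurable ℓ' → (∃ M, ∀ x, |ℓ' x| ≤ M) →
      Integrable (fun ω => ρ ω * h (X ω) * ∫ e in Iic (ℓ' (X ω)), f e (X ω)) μ := by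
    intro ℓ' hℓ' hℓ'b
    refine ((hd.integrable_mul_setIntegral_Iic hℓ' hℓ'b).bdd_mul
      (hh.comp hd.measurable_X).aestronglyMeasurable (ae_of_all _ fun ω => hM (X ω))).congr
      (ae_of_all _ fun ω => ?_)
    simp only [comp_apply]
    ring
  rw [hd.integral_eq ℓ h hℓ hℓb hh ⟨M, hM⟩,
    hd.integral_eq (fun _ => 0) h measurable_const ⟨0, by simp⟩ hh ⟨M, hM⟩,
    ← integral_sub (hint ℓ hℓ hℓb) (hint _ measurable_const ⟨0, by simp⟩)]
  refine integral_congr_ae ?_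
  filter_upwards [hd.ae_mul_intervalIntegral_eq ℓ] with ω hω
  linear_combination -h (X ω) * hω

end HasWeightedCondDensity

lemma condExp_comap_eq_zero_of_setIntegral_Iic {μ : Measure Ω} [IsFiniteMeasure μ] {W : Ω → ℝ}
    (hW : Measurable W) {G : Ω → ℝ} (hG : Integrable G μ)
    (h : ∀ w, ∫ ω in W ⁻¹' Iic w, G ω ∂μ = 0) :
    μ[G | MeasurableSpace.comap W inferInstance] =ᵐ[μ] 0 := by
  have htot : ∫ ω, G ω ∂μ = 0 := by
    have hmono : Monotone fun n : ℕ => W ⁻¹' Iic (n:ℝ) :=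
      fun m n hmn => preimage_mono (Iic_subset_Iic.2 (Nat.cast_le.2 hmn))
    have hcover : ⋃ n : ℕ, W ⁻¹' Iic (n:ℝ) = univ :=
      eq_univ_of_forall fun ω => mem_iUnion.2 (exists_nat_ge (W ω))
    have hlim := tendsto_setIntegral_of_monotone (fun n => hW measurableSet_Iic) hmono
      (by rw [hcover]; exact hG.integrableOn)
    rw [hcover, setIntegral_univ] at hlim
    exact tendsto_nhds_unique hlim (by simp [h])
  -- π-λ argument: the sets `Iic w` generate the Borel σ-algebra
  have hall : ∀ t, MeasurableSet t → ∫ ω in W ⁻¹' t, G ω ∂μ = 0 := by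
    intro t ht
    refine MeasurableSpace.induction_on_inter (C := fun t _ => ∫ ω in W ⁻¹' t, G ω ∂μ = 0)
      ((BorelSpace.measurable_eq (α := ℝ)).trans (borel_eq_generateFrom_Iic ℝ)) isPiSystem_Iic
      (by simp) ?_ ?_ ?_ t ht
    · rintro _ ⟨w, rfl⟩
      exact h w
    · intro t ht iht
      have := integral_add_compl (hW ht) hG
      rw [preimage_compl]
      linarith
    · intro S hdisj hS ihS
      rw [preimage_iUnion, integral_iUnion (fun i => hW (hS i))
        (hdisj.mono fun i j hij => hij.preimage W) hG.integrableOn]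
      simp [ihS]
  refine (ae_eq_condExp_of_forall_setIntegral_eq hW.comap_le hG
    (fun _ _ _ => integrableOn_zero) (fun s hs _ => ?_) aestronglyMeasurable_const).symm
  obtain ⟨t, ht, rfl⟩ := hs
  simp [hall t ht]

end WeightedCondDensity

section DurationModel

variable {Ω : Type*} [MeasureSpace Ω] [IsProbabilityMeasure (ℙ : Measure Ω)] {T Z U W : Ω → ℝ}

lemma outcome_le_iff_latent_le {φ0 φ0inv : ℝ → ℝ} {φ1 : ℝ → ℝ → ℝ}
    (hφ0mono : StrictMonoOn φ0 (Ici 0)) (hφ0invnn : ∀ t, 0 ≤ t → 0 ≤ φ0inv t)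
    (hφ0inv2 : ∀ t, 0 ≤ t → φ0 (φ0inv t) = t)
    (hφ1mono : ∀ z, 0 ≤ z → StrictMonoOn (φ1 z) (Ici 0))
    (hφ1fix : ∀ z, 0 ≤ z → φ1 z (φ0inv z) = z) {t z v u : ℝ} (hz : 0 ≤ z) (hv : 0 ≤ v)
    (hu : 0 ≤ u) (hmodel : (φ0 v < z → t = φ0 v) ∧ (z ≤ φ0 v → t = φ1 z v)) :
    (t ≤ φ0 u ∧ t < z) ∨ (t ≤ φ1 z u ∧ z ≤ t) ↔ v ≤ u := by
  obtain ⟨h0, h1⟩ := hmodel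
  rcases lt_or_ge (φ0 v) z with hvz | hzv
  · obtain rfl := h0 hvz
    simp [hvz, not_le.2 hvz, hφ0mono.le_iff_le hv hu]
  · obtain rfl := h1 hzv
    have hinv : φ0inv z ≤ v :=
      (hφ0mono.le_iff_le (hφ0invnn z hz) hv).1 (by rwa [hφ0inv2 z hz])
    have hzt : z ≤ φ1 z v := calc
      z = φ1 z (φ0inv z) := (hφ1fix z hz).symm
      _ ≤ φ1 z v := ((hφ1mono z hz).le_iff_le (hφ0invnn z hz) hv).2 hinv
    simp [hzt, not_lt.2 hzt, (hφ1mono z hz).le_iff_le hv hu]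

lemma identification_eq_of_model {φ0 φ0inv : ℝ → ℝ} {φ1 : ℝ → ℝ → ℝ}
    (hT : Measurable T) (hZ : Measurable Z) (hW : Measurable W)
    (hZnn : ∀ ω, 0 ≤ Z ω) (hUnn : ∀ ω, 0 ≤ U ω)
    (hφ0mono : StrictMonoOn φ0 (Ici 0)) (hφ0invnn : ∀ t, 0 ≤ t → 0 ≤ φ0inv t)
    (hφ0inv2 : ∀ t, 0 ≤ t → φ0 (φ0inv t) = t)
    (hφ1mono : ∀ z, 0 ≤ z → StrictMonoOn (φ1 z) (Ici 0))
    (hφ1fix : ∀ z, 0 ≤ z → φ1 z (φ0inv z) = z)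
    (hmodel : ∀ᵐ ω ∂ℙ, (φ0 (U ω) < Z ω → T ω = φ0 (U ω)) ∧
      (Z ω ≤ φ0 (U ω) → T ω = φ1 (Z ω) (U ω)))
    (hUW : IndepFun U W ℙ) {u : ℝ} (hu : 0 ≤ u)
    (hUexp : ℙ {ω | U ω ≤ u} = ENNReal.ofReal (1 - Real.exp (-u)))
    (hg : Measurable fun z => φ1 z u) (w : ℝ) :
    (ℙ {ω | T ω ≤ φ0 u ∧ T ω < Z ω ∧ W ω ≤ w}).toReal
        + (ℙ {ω | T ω ≤ φ1 (Z ω) u ∧ Z ω ≤ T ω ∧ W ω ≤ w}).toReal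
      = (1 - Real.exp (-u)) * (ℙ {ω | W ω ≤ w}).toReal := by
  have hdisj : Disjoint {ω | T ω ≤ φ0 u ∧ T ω < Z ω ∧ W ω ≤ w}
      {ω | T ω ≤ φ1 (Z ω) u ∧ Z ω ≤ T ω ∧ W ω ≤ w} :=
    disjoint_left.2 fun ω h0 h1 => not_le.2 h0.2.1 h1.2.1
  have hmeas : MeasurableSet {ω | T ω ≤ φ1 (Z ω) u ∧ Z ω ≤ T ω ∧ W ω ≤ w} :=
    (measurableSet_le hT (hg.comp hZ)).inter
      ((measurableSet_le hZ hT).inter (measurableSet_le hW measurable_const))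
  have hunion : ({ω | T ω ≤ φ0 u ∧ T ω < Z ω ∧ W ω ≤ w}
      ∪ {ω | T ω ≤ φ1 (Z ω) u ∧ Z ω ≤ T ω ∧ W ω ≤ w} : Set Ω)
        =ᵐ[ℙ] (U ⁻¹' Iic u ∩ W ⁻¹' Iic w : Set Ω) := by
    filter_upwards [hmodel] with ω hω
    have := outcome_le_iff_latent_le hφ0mono hφ0invnn hφ0inv2 hφ1mono hφ1fix (hZnn ω) (hUnn ω)
      hu hω
    rw [eq_iff_iff]
    change ω ∈ (_ : Set Ω) ↔ ω ∈ (_ : Set Ω)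
    simp only [mem_ofPred_eq, mem_preimage, mem_Iic]
    tauto
  rw [← ENNReal.toReal_add (measure_ne_top _ _) (measure_ne_top _ _), ← measure_union hdisj hmeas,
    measure_congr hunion, hUW.measure_inter_preimage_eq_mul _ _ measurableSet_Iic
      measurableSet_Iic]
  change (ℙ {ω | U ω ≤ u} * ℙ {ω | W ω ≤ w}).toReal = _
  rw [ENNReal.toReal_mul, hUexp,
    ENNReal.toReal_ofReal (sub_nonneg.2 (Real.exp_le_one_iff.2 (neg_nonpos.2 hu)))]

lemma untreated_setIntegral_eq (hT : Measurable T) (hZ : Measurable Z) (hW : Measurable W)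
    {s : ℝ} {g : ℝ → ℝ} (hg : Measurable g) {f0 : ℝ → ℝ → ℝ}
    (hf0 : Measurable fun p : ℝ × ℝ => f0 p.1 p.2) (hf0nn : ∀ e w, 0 ≤ f0 e w)
    (hdens : CondDensityIdentity ℙ W (fun ω => 1 - if Z ω ≤ T ω then (1:ℝ) else 0)
      (fun ω => T ω - if Z ω ≤ T ω then g (Z ω) else s) f0) (c : ℝ) :
    Integrable (fun ω => (1 - if Z ω ≤ T ω then (1:ℝ) else 0)
        * ∫ e in (0:ℝ)..(c - s), f0 e (W ω)) ℙ ∧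
      ∀ w, ∫ ω in W ⁻¹' Iic w, (1 - if Z ω ≤ T ω then (1:ℝ) else 0)
          * (∫ e in (0:ℝ)..(c - s), f0 e (W ω))
        = (ℙ {ω | T ω ≤ c ∧ T ω < Z ω ∧ W ω ≤ w}).toReal
          - (ℙ {ω | T ω ≤ s ∧ T ω < Z ω ∧ W ω ≤ w}).toReal := by
  have hD := measurableSet_le hZ hT
  have hd : HasWeightedCondDensity ℙ W _ _ f0 :=
    ⟨hdens, hW, measurable_const.sub (Measurable.ite hD measurable_const measurable_const),
      fun ω => by split_ifs <;> simp, hT.sub (Measurable.ite hD (hg.comp hZ) measurable_const),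
      hf0, hf0nn⟩
  refine ⟨hd.integrable_mul_intervalIntegral measurable_const ⟨|c - s|, fun _ => le_rfl⟩,
    fun w => ?_⟩
  have hprob : ∀ c', ∫ ω, (if T ω - (if Z ω ≤ T ω then g (Z ω) else s) ≤ c' - s then (1:ℝ) else 0)
      * (1 - if Z ω ≤ T ω then (1:ℝ) else 0) * (Iic w).indicator 1 (W ω)
      = (ℙ {ω | T ω ≤ c' ∧ T ω < Z ω ∧ W ω ≤ w}).toReal := by
    intro c'
    have hS : MeasurableSet {ω | T ω ≤ c' ∧ T ω < Z ω ∧ W ω ≤ w} :=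
      (measurableSet_le hT measurable_const).inter
        ((measurableSet_lt hT hZ).inter (measurableSet_le hW measurable_const))
    rw [← measureReal_def, ← integral_indicator_one hS]
    congr 1 with ω
    rcases le_or_gt (Z ω) (T ω) with hzt | hzt
    · by_cases hwt : W ω ≤ w <;> simp [hzt, hzt.not_gt, hwt]
    · by_cases hwt : W ω ≤ w <;> simp [hzt, hzt.not_ge, hwt, indicator_apply]
  have h0 := hprob s
  rw [sub_self] at h0
  rw [setIntegral_preimage_eq_integral_mul_indicator hW measurableSet_Iic, ← hprob c, ← h0,
    hd.integral_ite_sub_integral_ite measurable_const ⟨|c - s|, fun _ => le_rfl⟩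
      (measurable_one.indicator measurableSet_Iic) ⟨1, abs_indicator_one_le_one _⟩]

lemma treated_setIntegral_eq (hT : Measurable T) (hZ : Measurable Z) (hW : Measurable W)
    {s : ℝ} {g : ℝ → ℝ} (hg : Measurable g) (hgb : ∃ M, ∀ z, |g z| ≤ M) {c : ℝ → ℝ}
    (hc : Measurable c) (hcb : ∃ M, ∀ z, |c z| ≤ M) {f1 : ℝ → ℝ → ℝ → ℝ}
    (hf1 : Measurable fun p : ℝ × ℝ × ℝ => f1 p.1 p.2.1 p.2.2) (hf1nn : ∀ e z w, 0 ≤ f1 e z w)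
    (hdens : CondDensityIdentity ℙ (fun ω => (Z ω, W ω))
      (fun ω => if Z ω ≤ T ω then (1:ℝ) else 0)
      (fun ω => T ω - if Z ω ≤ T ω then g (Z ω) else s) fun e p => f1 e p.1 p.2) :
    Integrable (fun ω => (if Z ω ≤ T ω then (1:ℝ) else 0)
        * ∫ e in (0:ℝ)..(c (Z ω) - g (Z ω)), f1 e (Z ω) (W ω)) ℙ ∧
      ∀ w, ∫ ω in W ⁻¹' Iic w, (if Z ω ≤ T ω then (1:ℝ) else 0)
          * (∫ e in (0:ℝ)..(c (Z ω) - g (Z ω)), f1 e (Z ω) (W ω))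
        = (ℙ {ω | T ω ≤ c (Z ω) ∧ Z ω ≤ T ω ∧ W ω ≤ w}).toReal
          - (ℙ {ω | T ω ≤ g (Z ω) ∧ Z ω ≤ T ω ∧ W ω ≤ w}).toReal := by
  have hD := measurableSet_le hZ hT
  have hd : HasWeightedCondDensity ℙ (fun ω => (Z ω, W ω)) _ _ fun e p => f1 e p.1 p.2 :=
    ⟨hdens, hZ.prodMk hW, Measurable.ite hD measurable_const measurable_const,
      fun ω => by split_ifs <;> simp, hT.sub (Measurable.ite hD (hg.comp hZ) measurable_const),
      hf1, fun e p => hf1nn e p.1 p.2⟩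
  have hℓ : Measurable fun p : ℝ × ℝ => c p.1 - g p.1 :=
    (hc.comp measurable_fst).sub (hg.comp measurable_fst)
  have hℓb : ∃ M, ∀ p : ℝ × ℝ, |c p.1 - g p.1| ≤ M :=
    let ⟨M, hM⟩ := exists_abs_sub_le hcb hgb
    ⟨M, fun p => hM p.1⟩
  refine ⟨hd.integrable_mul_intervalIntegral hℓ hℓb, fun w => ?_⟩
  have hprob : ∀ c' : ℝ → ℝ, Measurable c' →
      ∫ ω, (if T ω - (if Z ω ≤ T ω then g (Z ω) else s) ≤ c' (Z ω) - g (Z ω) then (1:ℝ) else 0)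
        * (if Z ω ≤ T ω then (1:ℝ) else 0) * (Iic w).indicator 1 (W ω)
      = (ℙ {ω | T ω ≤ c' (Z ω) ∧ Z ω ≤ T ω ∧ W ω ≤ w}).toReal := by
    intro c' hc'
    have hS : MeasurableSet {ω | T ω ≤ c' (Z ω) ∧ Z ω ≤ T ω ∧ W ω ≤ w} :=
      (measurableSet_le hT (hc'.comp hZ)).inter (hD.inter (measurableSet_le hW measurable_const))
    rw [← measureReal_def, ← integral_indicator_one hS]
    congr 1 with ω
    by_cases hzt : Z ω ≤ T ω <;> by_cases hwt : W ω ≤ w <;> simp [hzt, hwt, indicator_apply]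
  have h0 := hprob g hg
  simp only [sub_self] at h0
  have key := hd.integral_ite_sub_integral_ite hℓ hℓb (h := fun p => (Iic w).indicator 1 p.2)
    ((measurable_one.indicator measurableSet_Iic).comp measurable_snd)
    ⟨1, fun p => abs_indicator_one_le_one _ _⟩
  rw [setIntegral_preimage_eq_integral_mul_indicator hW measurableSet_Iic, ← hprob c hc, ← h0]
  exact key.symm

lemma completeness_integrand_eq (p : Prop) [Decidable p] (Δ0 Δ1 : ℝ) (f0 f1 : ℝ → ℝ) :
    (Δ0 * (1 - if p then (1:ℝ) else 0) + Δ1 * if p then (1:ℝ) else 0)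
        * ((1 - if p then (1:ℝ) else 0) * (∫ δ in (0:ℝ)..1, f0 (δ * Δ0))
          + (if p then (1:ℝ) else 0) * ∫ δ in (0:ℝ)..1, f1 (δ * Δ1))
      = (1 - if p then (1:ℝ) else 0) * (∫ e in (0:ℝ)..Δ0, f0 e)
        + (if p then (1:ℝ) else 0) * ∫ e in (0:ℝ)..Δ1, f1 e := by
  split_ifs <;> simp

lemma eq_zero_and_ae_treated_eq_zero (hZ : Measurable Z) (hT : Measurable T)
    (hD1lt : ℙ {ω | Z ω ≤ T ω} < 1) {Δ0 : ℝ} {Δ1 : Ω → ℝ}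
    (h : (fun ω => Δ0 * (1 - if Z ω ≤ T ω then (1:ℝ) else 0)
      + Δ1 ω * if Z ω ≤ T ω then (1:ℝ) else 0) =ᵐ[ℙ] 0) :
    Δ0 = 0 ∧ ∀ᵐ ω ∂ℙ, Z ω ≤ T ω → Δ1 ω = 0 := by
  refine ⟨?_, h.mono fun ω hω hD => by simpa [hD] using hω⟩
  by_contra hΔ0
  have hall : ∀ᵐ ω ∂ℙ, Z ω ≤ T ω :=
    h.mono fun ω hω => by_contra fun hD => hΔ0 (by simpa [hD] using hω)
  exact hD1lt.ne ((ae_iff_prob_eq_one (measurableSet_setOfPred.1 (measurableSet_le hZ hT))).1 hall)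

lemma ae_eq_below_of_ae_eq_treated (hZ : Measurable Z) (hT : Measurable T) {ψ g : ℝ → ℝ}
    (hψ : Measurable ψ) (hg : Measurable g) {fZ fZD1 : ℝ → ℝ} (hfZmeas : Measurable fZ)
    (hZlaw : Measure.map Z ℙ = volume.withDensity fun z => ENNReal.ofReal (fZ z))
    (hfZD1nn : ∀ z, 0 ≤ fZD1 z)
    (hfZD1 : ∀ h : ℝ → ℝ, Measurable h → (∃ M, ∀ x, |h x| ≤ M) →
      (∫ ω, h (Z ω) * (if Z ω ≤ T ω then (1:ℝ) else 0) ∂ℙ)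
        = (ℙ {ω | Z ω ≤ T ω}).toReal * ∫ z, h z * fZD1 z)
    (hD1pos : 0 < ℙ {ω | Z ω ≤ T ω}) {s K : ℝ}
    (hdom : ∀ᵐ z ∂(volume : Measure ℝ), (if z ≤ s then fZ z else 0) ≤ K * fZD1 z)
    (htreated : ∀ᵐ ω ∂ℙ, Z ω ≤ T ω → ψ (Z ω) = g (Z ω)) :
    ∀ᵐ ω ∂ℙ, Z ω ≤ s → ψ (Z ω) = g (Z ω) := by
  have hD1 : (ℙ {ω | Z ω ≤ T ω}).toReal ≠ 0 :=
    (ENNReal.toReal_pos hD1pos.ne' (measure_ne_top _ _)).ne'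
  -- with `h = 1` the representation forces `∫ fZD1 = 1`, excluding the junk value `0`
  have hint : Integrable fZD1 := by
    by_contra hni
    have h1 := hfZD1 1 measurable_const ⟨1, by simp⟩
    simp only [Pi.one_apply, one_mul, integral_undef hni, mul_zero] at h1
    rw [← measureReal_def, ← integral_indicator_one (measurableSet_le hZ hT)] at hD1
    exact hD1 (by rw [← h1]; congr 1 with ω)
  set N := {z | ψ z ≠ g z}
  have hN : MeasurableSet N := (measurableSet_eq_fun hψ hg).compl
  have hNfZD1 : ∀ᵐ z, z ∈ N → fZD1 z = 0 := by
    have h := hfZD1 (N.indicator 1) (measurable_one.indicator hN)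
      ⟨1, abs_indicator_one_le_one N⟩
    have hl : ∫ ω, N.indicator 1 (Z ω) * (if Z ω ≤ T ω then (1:ℝ) else 0) ∂ℙ = 0 := by
      refine integral_eq_zero_of_ae ?_
      filter_upwards [htreated] with ω hω
      by_cases hD : Z ω ≤ T ω
      · simp [hD, N, hω hD]
      · simp [hD]
    rw [hl, eq_comm, mul_eq_zero, or_iff_right hD1] at h
    have hnn : 0 ≤ᵐ[volume] fun z => N.indicator 1 z * fZD1 z :=
      ae_of_all _ fun z => mul_nonneg (indicator_nonneg (fun _ _ => zero_le_one) _) (hfZD1nn z)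
    have hint' : Integrable fun z => N.indicator 1 z * fZD1 z :=
      hint.bdd_mul (measurable_one.indicator hN).aestronglyMeasurable
        (ae_of_all _ fun z => abs_indicator_one_le_one N z)
    filter_upwards [(integral_eq_zero_iff_of_nonneg_ae hnn hint').1 h] with z hz hzN
    simpa [hzN] using hz
  have hlaw : ∀ᵐ z ∂(Measure.map Z ℙ), z ≤ s → ψ z = g z := by
    rw [hZlaw, ae_withDensity_iff hfZmeas.ennreal_ofReal]
    filter_upwards [hNfZD1, hdom] with z hz hdz hfz hzs
    by_contra hne
    rw [if_pos hzs, hz hne, mul_zero] at hdz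
    exact hfz (ENNReal.ofReal_eq_zero.2 hdz)
  exact ae_of_ae_map hZ.aemeasurable hlaw

end DurationModel

theorem global_identification_general
    {Ω : Type*} [MeasureSpace Ω] [IsProbabilityMeasure (ℙ : Measure Ω)]
    (T Z U W : Ω → ℝ)
    (hT : Measurable T) (hZ : Measurable Z) (hW : Measurable W)
    (hZnn : ∀ ω, 0 ≤ Z ω) (hUnn : ∀ ω, 0 ≤ U ω)
    (φ0 φ0inv : ℝ → ℝ) (φ1 : ℝ → ℝ → ℝ)
    (hφ0mono : StrictMonoOn φ0 (Set.Ici 0))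
    (hφ0invnn : ∀ t, 0 ≤ t → 0 ≤ φ0inv t)
    (hφ0inv2 : ∀ t, 0 ≤ t → φ0 (φ0inv t) = t)
    (hφ1meas : Measurable fun p : ℝ × ℝ => φ1 p.1 p.2)
    (hφ1mono : ∀ z, 0 ≤ z → StrictMonoOn (φ1 z) (Set.Ici 0))
    (hφ1fix : ∀ z, 0 ≤ z → φ1 z (φ0inv z) = z)
    (hmodel : ∀ᵐ ω ∂ℙ, (φ0 (U ω) < Z ω → T ω = φ0 (U ω)) ∧
      (Z ω ≤ φ0 (U ω) → T ω = φ1 (Z ω) (U ω)))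
    (hUexp : ∀ u, 0 ≤ u → ℙ {ω | U ω ≤ u} = ENNReal.ofReal (1 - Real.exp (-u)))
    (hUW : IndepFun U W ℙ)
    -- the fixed quantile level `u`, with `s* = φ0 u` and `g* = φ1 · u` bounded
    (u : ℝ) (hu : 0 < u)
    (hgbdd : ∃ M, ∀ z, |φ1 z u| ≤ M)
    -- the treatment indicator `D = 1{Z ≤ T}` satisfies `0 < P(D = 1) < 1`
    (hD1pos : 0 < ℙ {ω | Z ω ≤ T ω}) (hD1lt : ℙ {ω | Z ω ≤ T ω} < 1)
    -- conditional densities of `ε = T − s*(1−D) − g*(Z)D`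
    (f0 : ℝ → ℝ → ℝ) (f1 : ℝ → ℝ → ℝ → ℝ)
    (hf0meas : Measurable fun p : ℝ × ℝ => f0 p.1 p.2)
    (hf0nn : ∀ e w, 0 ≤ f0 e w)
    (hf1meas : Measurable fun p : ℝ × ℝ × ℝ => f1 p.1 p.2.1 p.2.2)
    (hf1nn : ∀ e z w, 0 ≤ f1 e z w)
    (hf0dens : ∀ ℓ h : ℝ → ℝ, Measurable ℓ → (∃ M, ∀ x, |ℓ x| ≤ M) →
      Measurable h → (∃ M, ∀ x, |h x| ≤ M) →
      (∫ ω, (if T ω - (if Z ω ≤ T ω then φ1 (Z ω) u else φ0 u) ≤ ℓ (W ω) then (1:ℝ) else 0)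
          * (1 - (if Z ω ≤ T ω then (1:ℝ) else 0)) * h (W ω) ∂ℙ)
        = ∫ ω, (1 - (if Z ω ≤ T ω then (1:ℝ) else 0)) * h (W ω)
            * (∫ e in Set.Iic (ℓ (W ω)), f0 e (W ω)) ∂ℙ)
    (hf1dens : ∀ ℓ h : ℝ × ℝ → ℝ, Measurable ℓ → (∃ M, ∀ x, |ℓ x| ≤ M) →
      Measurable h → (∃ M, ∀ x, |h x| ≤ M) →
      (∫ ω, (if T ω - (if Z ω ≤ T ω then φ1 (Z ω) u else φ0 u) ≤ ℓ (Z ω, W ω) then (1:ℝ) else 0)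
          * (if Z ω ≤ T ω then (1:ℝ) else 0) * h (Z ω, W ω) ∂ℙ)
        = ∫ ω, (if Z ω ≤ T ω then (1:ℝ) else 0) * h (Z ω, W ω)
            * (∫ e in Set.Iic (ℓ (Z ω, W ω)), f1 e (Z ω) (W ω)) ∂ℙ)
    -- Assumption 3.5 (bounded strong completeness)
    (hcomp : ∀ (Δ0 : ℝ) (Δ1 : ℝ → ℝ), Measurable Δ1 → (∃ M, ∀ x, |Δ1 x| ≤ M) →
      (ℙ[fun ω =>
            (Δ0 * (1 - (if Z ω ≤ T ω then (1:ℝ) else 0))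
              + Δ1 (Z ω) * (if Z ω ≤ T ω then (1:ℝ) else 0))
            * ((1 - (if Z ω ≤ T ω then (1:ℝ) else 0))
                  * (∫ δ in (0:ℝ)..1, f0 (δ * Δ0) (W ω))
                + (if Z ω ≤ T ω then (1:ℝ) else 0)
                  * (∫ δ in (0:ℝ)..1, f1 (δ * Δ1 (Z ω)) (Z ω) (W ω)))
          | MeasurableSpace.comap W inferInstance] =ᵐ[ℙ] 0) →
      (fun ω => Δ0 * (1 - (if Z ω ≤ T ω then (1:ℝ) else 0))
          + Δ1 (Z ω) * (if Z ω ≤ T ω then (1:ℝ) else 0)) =ᵐ[ℙ] 0)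
    -- Assumption 3.4 (regularity)
    (fZ : ℝ → ℝ) (hfZmeas : Measurable fZ)
    (hZlaw : Measure.map Z ℙ = volume.withDensity fun z => ENNReal.ofReal (fZ z))
    (fZD1 : ℝ → ℝ) (hfZD1nn : ∀ z, 0 ≤ fZD1 z)
    (hfZD1 : ∀ h : ℝ → ℝ, Measurable h → (∃ M, ∀ x, |h x| ≤ M) →
      (∫ ω, h (Z ω) * (if Z ω ≤ T ω then (1:ℝ) else 0) ∂ℙ)
        = (ℙ {ω | Z ω ≤ T ω}).toReal * ∫ z, h z * fZD1 z)
    (K : ℝ)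
    (hdom : ∀ᵐ z ∂(volume : Measure ℝ), (if z ≤ φ0 u then fZ z else 0) ≤ K * fZD1 z) :
    -- conclusion: any solution in the parameter space induces `φ(·,u)` a.s.
    ∀ (ψ0 : ℝ) (ψ1 : ℝ → ℝ), Measurable ψ1 → (∃ M, ∀ x, |ψ1 x| ≤ M) →
      (∀ w : ℝ,
        (ℙ {ω | T ω ≤ ψ0 ∧ T ω < Z ω ∧ W ω ≤ w}).toReal
          + (ℙ {ω | T ω ≤ ψ1 (Z ω) ∧ Z ω ≤ T ω ∧ W ω ≤ w}).toReal
        = (1 - Real.exp (-u)) * (ℙ {ω | W ω ≤ w}).toReal) →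
      ∀ᵐ ω ∂ℙ,
        ψ0 * (if ψ0 < Z ω then (1:ℝ) else 0) + ψ1 (Z ω) * (if Z ω ≤ ψ0 then (1:ℝ) else 0)
          = φ0 u * (if φ0 u < Z ω then (1:ℝ) else 0)
            + φ1 (Z ω) u * (if Z ω ≤ φ0 u then (1:ℝ) else 0) := by
  intro ψ0 ψ1 hψ1 hψ1b hsol
  have hg : Measurable fun z => φ1 z u := hφ1meas.comp (measurable_id.prodMk measurable_const)
  obtain ⟨hint0, hset0⟩ := untreated_setIntegral_eq hT hZ hW hg hf0meas hf0nn hf0dens ψ0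
  obtain ⟨hint1, hset1⟩ :=
    treated_setIntegral_eq hT hZ hW hg hgbdd hψ1 hψ1b hf1meas hf1nn hf1dens
  have hkey : ∀ w, ∫ ω in W ⁻¹' Iic w,
      ((1 - if Z ω ≤ T ω then (1:ℝ) else 0) * (∫ e in (0:ℝ)..(ψ0 - φ0 u), f0 e (W ω))
        + (if Z ω ≤ T ω then (1:ℝ) else 0)
          * ∫ e in (0:ℝ)..(ψ1 (Z ω) - φ1 (Z ω) u), f1 e (Z ω) (W ω)) = 0 := fun w => by
    rw [integral_add hint0.integrableOn hint1.integrableOn, hset0, hset1]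
    linarith [hsol w, identification_eq_of_model hT hZ hW hZnn hUnn hφ0mono hφ0invnn hφ0inv2
      hφ1mono hφ1fix hmodel hUW hu.le (hUexp u hu.le) hg w]
  have hce := hcomp (ψ0 - φ0 u) (fun z => ψ1 z - φ1 z u) (hψ1.sub hg)
    (exists_abs_sub_le hψ1b hgbdd) <| by
      convert condExp_comap_eq_zero_of_setIntegral_Iic hW (hint0.add hint1) hkey using 3 with ω
      exact completeness_integrand_eq _ _ _ (fun e => f0 e (W ω)) (fun e => f1 e (Z ω) (W ω))
  obtain ⟨hψ0, htreated⟩ := eq_zero_and_ae_treated_eq_zero hZ hT hD1lt hce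
  have hbelow := ae_eq_below_of_ae_eq_treated hZ hT hψ1 hg hfZmeas hZlaw hfZD1nn hfZD1 hD1pos
    hdom (htreated.mono fun ω h hD => sub_eq_zero.1 (h hD))
  filter_upwards [hbelow] with ω hω
  rw [sub_eq_zero.1 hψ0]
  by_cases hzs : Z ω ≤ φ0 u <;> simp [hzs, hω]

/-- Paper's Theorem 3.3 (global identification): under the nonseparable duration model with
a unit-exponential `U` independent of the instrument `W`, completeness and regularity
assumptions, any pair `(ψ₀, ψ₁)` from the parameter space solving the identification
equation induces the same regression function as `(φ₀(u), φ₁(·,u))`, `ℙ`-almost surely. -/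
theorem global_identification
    {Ω : Type*} [MeasureSpace Ω] [IsProbabilityMeasure (ℙ : Measure Ω)]
    (T Z U W : Ω → ℝ)
    (hT : Measurable T) (hZ : Measurable Z) (hU : Measurable U) (hW : Measurable W)
    (hTnn : ∀ ω, 0 ≤ T ω) (hZnn : ∀ ω, 0 ≤ Z ω) (hUnn : ∀ ω, 0 ≤ U ω)
    (φ0 φ0inv : ℝ → ℝ) (φ1 : ℝ → ℝ → ℝ)
    (hφ0mono : StrictMonoOn φ0 (Set.Ici 0))
    (hφ0nn : ∀ u, 0 ≤ u → 0 ≤ φ0 u)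
    (hφ0invnn : ∀ t, 0 ≤ t → 0 ≤ φ0inv t)
    (hφ0inv1 : ∀ u, 0 ≤ u → φ0inv (φ0 u) = u)
    (hφ0inv2 : ∀ t, 0 ≤ t → φ0 (φ0inv t) = t)
    (hφ1meas : Measurable fun p : ℝ × ℝ => φ1 p.1 p.2)
    (hφ1nn : ∀ z u, 0 ≤ z → 0 ≤ u → 0 ≤ φ1 z u)
    (hφ1mono : ∀ z, 0 ≤ z → StrictMonoOn (φ1 z) (Set.Ici 0))
    (hφ1fix : ∀ z, 0 ≤ z → φ1 z (φ0inv z) = z)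
    (hmodel : ∀ᵐ ω ∂ℙ, (φ0 (U ω) < Z ω → T ω = φ0 (U ω)) ∧
      (Z ω ≤ φ0 (U ω) → T ω = φ1 (Z ω) (U ω)))
    (hUexp : ∀ u, 0 ≤ u → ℙ {ω | U ω ≤ u} = ENNReal.ofReal (1 - Real.exp (-u)))
    (hUW : IndepFun U W ℙ)
    -- the fixed quantile level `u`, with `s* = φ0 u` and `g* = φ1 · u` bounded
    (u : ℝ) (hu : 0 < u)
    (hgbdd : ∃ M, ∀ z, |φ1 z u| ≤ M)
    -- the treatment indicator `D = 1{Z ≤ T}` satisfies `0 < P(D = 1) < 1`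
    (hD1pos : 0 < ℙ {ω | Z ω ≤ T ω}) (hD1lt : ℙ {ω | Z ω ≤ T ω} < 1)
    -- conditional densities of `ε = T − s*(1−D) − g*(Z)D`
    (f0 : ℝ → ℝ → ℝ) (f1 : ℝ → ℝ → ℝ → ℝ)
    (hf0meas : Measurable fun p : ℝ × ℝ => f0 p.1 p.2)
    (hf0nn : ∀ e w, 0 ≤ f0 e w)
    (hf1meas : Measurable fun p : ℝ × ℝ × ℝ => f1 p.1 p.2.1 p.2.2)
    (hf1nn : ∀ e z w, 0 ≤ f1 e z w)
    (hf0dens : ∀ ℓ h : ℝ → ℝ, Measurable ℓ → (∃ M, ∀ x, |ℓ x| ≤ M) →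
      Measurable h → (∃ M, ∀ x, |h x| ≤ M) →
      (∫ ω, (if T ω - (if Z ω ≤ T ω then φ1 (Z ω) u else φ0 u) ≤ ℓ (W ω) then (1:ℝ) else 0)
          * (1 - (if Z ω ≤ T ω then (1:ℝ) else 0)) * h (W ω) ∂ℙ)
        = ∫ ω, (1 - (if Z ω ≤ T ω then (1:ℝ) else 0)) * h (W ω)
            * (∫ e in Set.Iic (ℓ (W ω)), f0 e (W ω)) ∂ℙ)
    (hf1dens : ∀ ℓ h : ℝ × ℝ → ℝ, Measurable ℓ → (∃ M, ∀ x, |ℓ x| ≤ M) →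
      Measurable h → (∃ M, ∀ x, |h x| ≤ M) →
      (∫ ω, (if T ω - (if Z ω ≤ T ω then φ1 (Z ω) u else φ0 u) ≤ ℓ (Z ω, W ω) then (1:ℝ) else 0)
          * (if Z ω ≤ T ω then (1:ℝ) else 0) * h (Z ω, W ω) ∂ℙ)
        = ∫ ω, (if Z ω ≤ T ω then (1:ℝ) else 0) * h (Z ω, W ω)
            * (∫ e in Set.Iic (ℓ (Z ω, W ω)), f1 e (Z ω) (W ω)) ∂ℙ)
    -- Assumption 3.5 (bounded strong completeness)
    (hcomp : ∀ (Δ0 : ℝ) (Δ1 : ℝ → ℝ), Measurable Δ1 → (∃ M, ∀ x, |Δ1 x| ≤ M) →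
      (ℙ[fun ω =>
            (Δ0 * (1 - (if Z ω ≤ T ω then (1:ℝ) else 0))
              + Δ1 (Z ω) * (if Z ω ≤ T ω then (1:ℝ) else 0))
            * ((1 - (if Z ω ≤ T ω then (1:ℝ) else 0))
                  * (∫ δ in (0:ℝ)..1, f0 (δ * Δ0) (W ω))
                + (if Z ω ≤ T ω then (1:ℝ) else 0)
                  * (∫ δ in (0:ℝ)..1, f1 (δ * Δ1 (Z ω)) (Z ω) (W ω)))
          | MeasurableSpace.comap W inferInstance] =ᵐ[ℙ] 0) →
      (fun ω => Δ0 * (1 - (if Z ω ≤ T ω then (1:ℝ) else 0))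
          + Δ1 (Z ω) * (if Z ω ≤ T ω then (1:ℝ) else 0)) =ᵐ[ℙ] 0)
    -- Assumption 3.4 (regularity)
    (fZ : ℝ → ℝ) (hfZmeas : Measurable fZ) (hfZnn : ∀ z, 0 ≤ fZ z)
    (hZlaw : Measure.map Z ℙ = volume.withDensity fun z => ENNReal.ofReal (fZ z))
    (fZD1 : ℝ → ℝ) (hfZD1meas : Measurable fZD1) (hfZD1nn : ∀ z, 0 ≤ fZD1 z)
    (hfZD1 : ∀ h : ℝ → ℝ, Measurable h → (∃ M, ∀ x, |h x| ≤ M) →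
      (∫ ω, h (Z ω) * (if Z ω ≤ T ω then (1:ℝ) else 0) ∂ℙ)
        = (ℙ {ω | Z ω ≤ T ω}).toReal * ∫ z, h z * fZD1 z)
    (K : ℝ) (hK : 0 < K)
    (hdom : ∀ᵐ z ∂(volume : Measure ℝ), (if z ≤ φ0 u then fZ z else 0) ≤ K * fZD1 z) :
    -- conclusion: any solution in the parameter space induces `φ(·,u)` a.s.
    ∀ (ψ0 : ℝ) (ψ1 : ℝ → ℝ), Measurable ψ1 → (∃ M, ∀ x, |ψ1 x| ≤ M) →
      (∀ w : ℝ,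
        (ℙ {ω | T ω ≤ ψ0 ∧ T ω < Z ω ∧ W ω ≤ w}).toReal
          + (ℙ {ω | T ω ≤ ψ1 (Z ω) ∧ Z ω ≤ T ω ∧ W ω ≤ w}).toReal
        = (1 - Real.exp (-u)) * (ℙ {ω | W ω ≤ w}).toReal) →
      ∀ᵐ ω ∂ℙ,
        ψ0 * (if ψ0 < Z ω then (1:ℝ) else 0) + ψ1 (Z ω) * (if Z ω ≤ ψ0 then (1:ℝ) else 0)
          = φ0 u * (if φ0 u < Z ω then (1:ℝ) else 0)
            + φ1 (Z ω) u * (if Z ω ≤ φ0 u then (1:ℝ) else 0) :=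
  global_identification_general T Z U W hT hZ hW hZnn hUnn φ0 φ0inv φ1 hφ0mono hφ0invnn hφ0inv2
    hφ1meas hφ1mono hφ1fix hmodel hUexp hUW u hu hgbdd hD1pos hD1lt f0 f1 hf0meas hf0nn hf1meas
    hf1nn hf0dens hf1dens hcomp fZ hfZmeas hZlaw fZD1 hfZD1nn hfZD1 K hdom
end

section
/- Reformulation as a nonseparable model (paper's Lemma 2.1): in the potential-outcomes duration model with no anticipation and rank invariance, the observed duration satisfies, for every ω, T_obs(ω) = φ₀(U(ω)) if Z(ω) > φ₀(U(ω[)), and T_obs(ω) = φ₁(Z(ω), U(ω)) if Z(ω) ≤ φ₀(U(ω)); moreover φ₁(z, Λ(∞, z)) = z for every z ∈ [0,∞), i.e. φ₁(z, φ₀⁻¹(z)) = z. -/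
open MeasureTheory Set

/-- Paper's Lemma 2.1 (reformulation as a nonseparable model): under no anticipation and
rank invariance, the observed duration `T_obs ω = T (Z ω) ω` equals `φ₀(U ω)` on
`{Z > φ₀(U)}` and `φ₁(Z ω, U ω)` on `{Z ≤ φ₀(U)}`; moreover `φ₁(z, Λ(∞,z)) = z`. -/
theorem reformulation_nonseparable
    {Ω : Type*}
    (lam : ℝ → ℝ → ℝ) (laminf : ℝ → ℝ)
    (hlammeas : ∀ z, Measurable (lam z)) (hlaminfmeas : Measurable laminf)
    (hlamnn : ∀ z t, 0 ≤ z → 0 ≤ t → 0 ≤ lam z t)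
    (hlaminfnn : ∀ t, 0 ≤ t → 0 ≤ laminf t)
    (hlamint : ∀ z t, IntegrableOn (lam z) (Set.Ioc 0 t))
    (hlaminfint : ∀ t, IntegrableOn laminf (Set.Ioc 0 t))
    -- cumulative hazards
    (Lam : ℝ → ℝ → ℝ) (LamInf : ℝ → ℝ)
    (hLam : ∀ z t, Lam z t = ∫ s in (0:ℝ)..t, lam z s)
    (hLamInf : ∀ t, LamInf t = ∫ s in (0:ℝ)..t, laminf s)
    -- no anticipation
    (hNA : ∀ z z' t, 0 ≤ t → t ≤ min z z' → lam z t = lam z' t)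
    (hNAinf : ∀ z t, 0 ≤ t → t ≤ z → lam z t = laminf t)
    -- each cumulative hazard is a strictly increasing bijection from [0,∞) onto [0,∞)
    (hLammono : ∀ z, 0 ≤ z → StrictMonoOn (Lam z) (Set.Ici 0))
    (hLamsurj : ∀ z, 0 ≤ z → ∀ u, 0 ≤ u → ∃ t, 0 ≤ t ∧ Lam z t = u)
    (hLamInfmono : StrictMonoOn LamInf (Set.Ici 0))
    (hLamInfsurj : ∀ u, 0 ≤ u → ∃ t, 0 ≤ t ∧ LamInf t = u)
    -- inverses
    (φ0 : ℝ → ℝ) (φ1 : ℝ → ℝ → ℝ)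
    (hφ0left : ∀ t, 0 ≤ t → φ0 (LamInf t) = t)
    (hφ0right : ∀ u, 0 ≤ u → 0 ≤ φ0 u ∧ LamInf (φ0 u) = u)
    (hφ1left : ∀ z, 0 ≤ z → ∀ t, 0 ≤ t → φ1 z (Lam z t) = t)
    (hφ1right : ∀ z u, 0 ≤ z → 0 ≤ u → 0 ≤ φ1 z u ∧ Lam z (φ1 z u) = u)
    -- potential outcomes, treatment time, and rank invariance
    (Tpo : ℝ → Ω → ℝ) (Tinf : Ω → ℝ) (Z : Ω → ℝ) (U : Ω → ℝ)
    (hTponn : ∀ z ω, 0 ≤ z → 0 ≤ Tpo z ω) (hTinfnn : ∀ ω, 0 ≤ Tinf ω)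
    (hZnn : ∀ ω, 0 ≤ Z ω)
    (hRI : ∀ z, 0 ≤ z → ∀ ω, Lam z (Tpo z ω) = U ω)
    (hRIinf : ∀ ω, LamInf (Tinf ω) = U ω) :
    (∀ ω, (φ0 (U ω) < Z ω → Tpo (Z ω) ω = φ0 (U ω)) ∧
      (Z ω ≤ φ0 (U ω) → Tpo (Z ω) ω = φ1 (Z ω) (U ω))) ∧
    (∀ z, 0 ≤ z → φ1 z (LamInf z) = z) := by
  -- Key: Lam z t = LamInf t for 0 ≤ t ≤ z
  have key : ∀ z t, 0 ≤ t → t ≤ z → Lam z t = LamInf t := by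
    intro z t ht htz
    rw [hLam, hLamInf]
    apply intervalIntegral.integral_congr
    intro s hs
    rw [Set.uIcc_of_le ht] at hs
    exact hNAinf z s hs.1 (hs.2.trans htz)
  have hUnn : ∀ ω, 0 ≤ U ω := by
    intro ω
    rw [← hRIinf ω, hLamInf]
    exact intervalIntegral.integral_nonneg (hTinfnn ω) (fun s hs => hlaminfnn s hs.1)
  have hφ0U : ∀ ω, φ0 (U ω) = Tinf ω := by
    intro ω
    rw [← hRIinf ω]
    exact hφ0left _ (hTinfnn ω)
  constructor
  · intro ω
    constructor
    · intro h
      rw [hφ0U] at h ⊢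
      have hz := hZnn ω
      have h1 : Lam (Z ω) (Tpo (Z ω) ω) = Lam (Z ω) (Tinf ω) := by
        rw [hRI _ hz ω, key (Z ω) (Tinf ω) (hTinfnn ω) h.le, hRIinf ω]
      exact (hLammono (Z ω) hz).injOn (hTponn _ ω hz) (hTinfnn ω) h1
    · intro _
      rw [← hRI (Z ω) (hZnn ω) ω]
      exact (hφ1left _ (hZnn ω) _ (hTponn _ ω (hZnn ω))).symm
  · intro z hz
    rw [← key z z hz le_rfl]
    exact hφ1left z hz z hz
end

section
/- Inverse-probability-of-censoring identity for the treated (paper's equation (6)): in the censoring setup, for every measurable φ : [0,∞) → [0,∞) with φ(z) < c₀ for all z, and every w ∈ ℝ, E[ (δ / G(Y)) · 1{Y ≤ φ(Z̃)} · 1{D̃ = 1} · 1{W ≤ w} ] = P(T ≤ φ(Z) and D = 1 and W ≤ w). -/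
open MeasureTheory ProbabilityTheory Set
open scoped ENNReal

/-!
If the censoring time `C` is independent of `V` and `τ(V)` is the time to be survived, then
conditionally on `V = v` the event `τ v ≤ C` has probability `G(τ v) = P(C ≥ τ v)`, so weighting
it by `1 / G(τ v)` recovers `E[g(V)]`. The identity for the treated is the case `V = (T, Z, W)`,
`τ = T`, `g = 1{T ≤ φ(Z), Z ≤ T, W ≤ w}`: on `{T ≤ C}` one has `Y = T`, `Z̃ = Z` and `D̃ = D`.
-/

section IPCW

variable {Ω β : Type*} [MeasurableSpace Ω] [MeasurableSpace β] {μ : Measure Ω}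

lemma antitone_measure_setOf_le (C : Ω → ℝ) : Antitone fun t => μ {ω | t ≤ C ω} :=
  fun _ _ hst => measure_mono fun _ h => hst.trans h

variable [IsFiniteMeasure μ] {C : Ω → ℝ} {V : Ω → β} {τ : β → ℝ}

theorem lintegral_ipcw (hC : Measurable C) (hV : Measurable V) (hind : IndepFun C V μ)
    (hτ : Measurable τ) {g : β → ℝ≥0∞} (hg : Measurable g)
    (hpos : ∀ v, g v ≠ 0 → 0 < μ {ω | τ v ≤ C ω}) :
    ∫⁻ ω, (if τ (V ω) ≤ C ω then g (V ω) / μ {ω' | τ (V ω) ≤ C ω'} else 0) ∂μ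
      = ∫⁻ ω, g (V ω) ∂μ := by
  set F : ℝ × β → ℝ≥0∞ := fun p => if τ p.2 ≤ p.1 then g p.2 / μ {ω | τ p.2 ≤ C ω} else 0
  have hF : Measurable F :=
    Measurable.ite (measurableSet_le (hτ.comp measurable_snd) measurable_fst)
      ((hg.comp measurable_snd).div
        ((antitone_measure_setOf_le C).measurable.comp (hτ.comp measurable_snd)))
      measurable_const
  have hinner : ∀ v, ∫⁻ c, F (c, v) ∂(μ.map C) = g v := by
    intro v
    have hF_indicator : (fun c => F (c, v))
        = (Ici (τ v)).indicator fun _ => g v / μ {ω | τ v ≤ C ω} := by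
      funext c
      simp [F, indicator]
    rw [hF_indicator, lintegral_indicator measurableSet_Ici, setLIntegral_const,
      Measure.map_apply hC measurableSet_Ici]
    by_cases hv : g v = 0
    · simp [hv]
    · exact ENNReal.div_mul_cancel (hpos v hv).ne' (measure_ne_top _ _)
  calc _ = ∫⁻ ω, F (C ω, V ω) ∂μ := rfl
    _ = ∫⁻ p, F p ∂(μ.map fun ω => (C ω, V ω)) := (lintegral_map hF (hC.prodMk hV)).symm
    _ = ∫⁻ p, F p ∂((μ.map C).prod (μ.map V)) := by
      rw [(indepFun_iff_map_prod_eq_prod_map_map hC.aemeasurable hV.aemeasurable).mp hind]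
    _ = ∫⁻ v, ∫⁻ c, F (c, v) ∂(μ.map C) ∂(μ.map V) := lintegral_prod_symm F hF.aemeasurable
    _ = ∫⁻ v, g v ∂(μ.map V) := by simp_rw [hinner]
    _ = ∫⁻ ω, g (V ω) ∂μ := lintegral_map hg hV

theorem integral_ipcw (hC : Measurable C) (hV : Measurable V) (hind : IndepFun C V μ)
    (hτ : Measurable τ) {g : β → ℝ} (hg : Measurable g) (hg_nonneg : ∀ v, 0 ≤ g v)
    (hpos : ∀ v, g v ≠ 0 → 0 < μ {ω | τ v ≤ C ω}) :
    ∫ ω, (if τ (V ω) ≤ C ω then g (V ω) / (μ {ω' | τ (V ω) ≤ C ω'}).toReal else 0) ∂μ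
      = ∫ ω, g (V ω) ∂μ := by
  set f : Ω → ℝ := fun ω =>
    if τ (V ω) ≤ C ω then g (V ω) / (μ {ω' | τ (V ω) ≤ C ω'}).toReal else 0
  have hf_ofReal : ∀ ω, ENNReal.ofReal (f ω)
      = if τ (V ω) ≤ C ω then ENNReal.ofReal (g (V ω)) / μ {ω' | τ (V ω) ≤ C ω'} else 0 := by
    intro ω
    by_cases hv : g (V ω) = 0
    · simp [f, hv]
    · have hG := hpos (V ω) hv
      simp only [f, apply_ite ENNReal.ofReal, ENNReal.ofReal_zero,
        ENNReal.ofReal_div_of_pos (ENNReal.toReal_pos hG.ne' (measure_ne_top _ _)),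
        ENNReal.ofReal_toReal (measure_ne_top _ _)]
  have hf : Measurable f :=
    Measurable.ite (measurableSet_le (hτ.comp hV) hC)
      ((hg.comp hV).div
        ((antitone_measure_setOf_le C).measurable.comp (hτ.comp hV)).ennreal_toReal)
      measurable_const
  have hf_nonneg : ∀ ω, 0 ≤ f ω := fun ω => by
    by_cases h : τ (V ω) ≤ C ω
    · simpa [f, h] using div_nonneg (hg_nonneg (V ω)) ENNReal.toReal_nonneg
    · simp [f, h]
  rw [integral_eq_lintegral_of_nonneg_ae (.of_forall hf_nonneg) hf.aestronglyMeasurable,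
    integral_eq_lintegral_of_nonneg_ae (.of_forall fun ω => hg_nonneg (V ω))
      (hg.comp hV).aestronglyMeasurable]
  simp_rw [hf_ofReal]
  rw [lintegral_ipcw hC hV hind hτ hg.ennreal_ofReal fun v hv => hpos v fun h => hv (by simp [h])]

end IPCW

theorem ipcw_identity_treated_general
    {Ω : Type*} [MeasureSpace Ω] [IsProbabilityMeasure (ℙ : Measure Ω)]
    (T Z W C : Ω → ℝ)
    (hT : Measurable T) (hZ : Measurable Z) (hW : Measurable W) (hC : Measurable C)
    (hindep : IndepFun C (fun ω => (T ω, Z ω, W ω)) ℙ) :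
    ∀ φ : ℝ → ℝ, Measurable φ → (∀ z, 0 ≤ φ z) →
      (∀ z, ∃ s, φ z < s ∧ 0 < ℙ {ω | s ≤ C ω}) → ∀ w : ℝ,
      (∫ ω, (if T ω ≤ C ω then 1 / (ℙ {ω' | min (T ω) (C ω) ≤ C ω'}).toReal else 0)
          * (if min (T ω) (C ω) ≤ φ (min (Z ω) (min (T ω) (C ω))) then (1:ℝ) else 0)
          * (if Z ω ≤ min (T ω) (C ω) then (1:ℝ) else 0)
          * (if W ω ≤ w then (1:ℝ) else 0) ∂ℙ)
        = (ℙ {ω | T ω ≤ φ (Z ω) ∧ Z ω ≤ T ω ∧ W ω ≤ w}).toReal := by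
  intro φ hφ _ hφ_lt w
  set S : Set (ℝ × ℝ × ℝ) := {v | v.1 ≤ φ v.2.1 ∧ v.2.1 ≤ v.1 ∧ v.2.2 ≤ w}
  have hS : MeasurableSet S :=
    (measurableSet_le measurable_fst (hφ.comp measurable_snd.fst)).inter
      ((measurableSet_le measurable_snd.fst measurable_fst).inter
        (measurableSet_le measurable_snd.snd measurable_const))
  have hV : Measurable fun ω => (T ω, Z ω, W ω) := hT.prodMk (hZ.prodMk hW)
  have hpos : ∀ v, S.indicator (1 : ℝ × ℝ × ℝ → ℝ) v ≠ 0 → 0 < ℙ {ω | v.1 ≤ C ω} := by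
    intro v hv
    obtain ⟨s, hφs, hs⟩ := hφ_lt v.2.1
    have hvS : v ∈ S := by_contra fun h => hv (indicator_of_notMem h _)
    exact hs.trans_le (antitone_measure_setOf_le C (hvS.1.trans hφs.le))
  calc _ = ∫ ω, (if T ω ≤ C ω then
          S.indicator 1 (T ω, Z ω, W ω) / (ℙ {ω' | T ω ≤ C ω'}).toReal else 0) ∂ℙ :=
        integral_congr_ae (.of_forall fun ω => ?_)
    _ = ∫ ω, S.indicator 1 (T ω, Z ω, W ω) ∂ℙ :=
        integral_ipcw hC hV hindep measurable_fst (measurable_one.indicator hS)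
          (fun _ => indicator_nonneg (fun _ _ => zero_le_one) _) hpos
    _ = _ := integral_indicator_one (hV hS)
  by_cases hTC : T ω ≤ C ω
  · by_cases hZT : Z ω ≤ T ω
    · by_cases hTφ : T ω ≤ φ (Z ω) <;> simp [S, indicator, hTC, hZT, hTφ, div_eq_inv_mul]
    · simp [S, indicator, hTC, hZT]
  · simp [hTC]

/-- Paper's equation (6): the inverse-probability-of-censoring identity for the
treated. Here `G(t) = P(C ≥ t)`, `Y = min(T,C)`, `δ = 1{T ≤ C}`, `Z̃ = min(Z,Y)`,
`D̃ = 1{Z ≤ Y}`, `D = 1{Z ≤ T}`, and `φ(z) < c₀` (the upper bound of the support of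
`C`) is expressed as `∃ s > φ(z), G(s) > 0`. -/
theorem ipcw_identity_treated
    {Ω : Type*} [MeasureSpace Ω] [IsProbabilityMeasure (ℙ : Measure Ω)]
    (T Z W C : Ω → ℝ)
    (hT : Measurable T) (hZ : Measurable Z) (hW : Measurable W) (hC : Measurable C)
    (hTnn : ∀ ω, 0 ≤ T ω) (hZnn : ∀ ω, 0 ≤ Z ω) (hCnn : ∀ ω, 0 ≤ C ω)
    (hindep : IndepFun C (fun ω => (T ω, Z ω, W ω)) ℙ) :
    ∀ φ : ℝ → ℝ, Measurable φ → (∀ z, 0 ≤ φ z) →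
      (∀ z, ∃ s, φ z < s ∧ 0 < ℙ {ω | s ≤ C ω}) → ∀ w : ℝ,
      (∫ ω, (if T ω ≤ C ω then 1 / (ℙ {ω' | min (T ω) (C ω) ≤ C ω'}).toReal else 0)
          * (if min (T ω) (C ω) ≤ φ (min (Z ω) (min (T ω) (C ω))) then (1:ℝ) else 0)
          * (if Z ω ≤ min (T ω) (C ω) then (1:ℝ) else 0)
          * (if W ω ≤ w then (1:ℝ) else 0) ∂ℙ)
        = (ℙ {ω | T ω ≤ φ (Z ω) ∧ Z ω ≤ T ω ∧ W ω ≤ w}).toReal :=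
  ipcw_identity_treated_general T Z W C hT hZ hW hC hindep
end

section
/- Sufficient conditions for the bounded strong completeness assumption (paper's appendix lemma in Section S.1.6): let Z be a real random variable, D a {0,1}-valued random variable, W a real random variable; let κ be the conditional distribution of (Z,D) given W and μ_W the law of W. Let ω : ℝ×ℝ×ℝ → [0,∞) be bounded measurable with 0 < ∫ ω(z,d,w) dκ(w)(z,d) for μ_W-almost every w, and define the reweighted distribution ν on ℝ² by ν(B) = ∫ [ ∫_B ω(z,d,w) dκ(w)(z,d) / ∫ ω(z,d,w) dκ(w)(z,d) ] dμ_W(w) for Borel B ⊆ ℝ². Assume: (i) (bounded completeness) for every bounded measurable g : ℝ² → ℝ, if ∫ g(z,d)·ω(z,d,w) dκ(w)(z,d) = 0 for μ_W-almost every w, then ν({(z,d) : g(z,d) ≠ 0}) = 0; (ii) (absolute continuity) every Borel B ⊆ ℝ² with ν(B) = 0 satisfies P((Z,D) ∈ B) = 0. Then for every bounded measurable f : ℝ² → ℝ: if E[f(Z,D)·ω(Z,D,W) | σ(W)] = 0 almost surely, then f(Z,D) = 0 almost surely. -/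
/-!
Disintegrating along `W`, the conditional expectation `E[f(Z,D) ω(Z,D,W) | σ(W)]` is
`w ↦ ∫ f ω dκ(w)` evaluated at `W`, so its vanishing says that these moments vanish
`μ_W`-almost everywhere. Bounded completeness then gives `ν {f ≠ 0} = 0`, and absolute
continuity transfers this null set to the law of `(Z, D)`.
-/

open MeasureTheory ProbabilityTheory

theorem ae_integral_condDistrib_eq_zero_of_condExp_eq_zero
    {Ω α β E : Type*} {mΩ : MeasurableSpace Ω} {μ : Measure Ω} [IsFiniteMeasure μ]
    {mα : MeasurableSpace α} [MeasurableSpace β] [StandardBorelSpace β] [Nonempty β]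
    [NormedAddCommGroup E] [NormedSpace ℝ E] [CompleteSpace E]
    {W : Ω → α} {X : Ω → β} (hW : Measurable W) (hX : Measurable X)
    {F : α × β → E} (hF : StronglyMeasurable F) (hF_int : Integrable (fun a => F (W a, X a)) μ)
    (hcond : μ[fun a => F (W a, X a) | mα.comap W] =ᵐ[μ] 0) :
    ∀ᵐ w ∂μ.map W, ∫ x, F (w, x) ∂condDistrib X W μ w = 0 := by
  have hG : StronglyMeasurable fun w => ∫ x, F (w, x) ∂condDistrib X W μ w :=
    hF.integral_kernel_prod_right'
  refine (ae_map_iff hW.aemeasurable (hG.measurableSet_eq_fun stronglyMeasurable_const)).2 ?_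
  exact (condExp_prod_ae_eq_integral_condDistrib hW hX.aemeasurable hF hF_int).symm.trans hcond

theorem bounded_completeness_sufficient_conditions_general
    {Ω : Type*} [MeasureSpace Ω] [IsProbabilityMeasure (ℙ : Measure Ω)]
    (Z D W : Ω → ℝ)
    (hZ : Measurable Z) (hD : Measurable D) (hW : Measurable W)
    (ωf : ℝ → ℝ → ℝ → ℝ)
    (hωmeas : Measurable fun p : ℝ × ℝ × ℝ => ωf p.1 p.2.1 p.2.2)
    (hωnn : ∀ z d w, 0 ≤ ωf z d w)
    (hωbdd : ∃ M, ∀ z d w, ωf z d w ≤ M)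
    -- (i) bounded completeness for the reweighted family
    (hcomplete : ∀ g : ℝ × ℝ → ℝ, Measurable g → (∃ M, ∀ p, |g p| ≤ M) →
      (∀ᵐ w ∂(Measure.map W ℙ),
        (∫ p : ℝ × ℝ, g p * ωf p.1 p.2 w ∂(condDistrib (fun ω => (Z ω, D ω)) W ℙ w)) = 0) →
      (∫⁻ w, (∫⁻ p in {p : ℝ × ℝ | g p ≠ 0}, ENNReal.ofReal (ωf p.1 p.2 w)
                ∂(condDistrib (fun ω => (Z ω, D ω)) W ℙ w))
            / (∫⁻ p : ℝ × ℝ, ENNReal.ofReal (ωf p.1 p.2 w)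
                ∂(condDistrib (fun ω => (Z ω, D ω)) W ℙ w))
          ∂(Measure.map W ℙ)) = 0)
    -- (ii) absolute continuity of the law of (Z,D) w.r.t. ν
    (habscont : ∀ B : Set (ℝ × ℝ), MeasurableSet B →
      (∫⁻ w, (∫⁻ p in B, ENNReal.ofReal (ωf p.1 p.2 w)
                ∂(condDistrib (fun ω => (Z ω, D ω)) W ℙ w))
            / (∫⁻ p : ℝ × ℝ, ENNReal.ofReal (ωf p.1 p.2 w)
                ∂(condDistrib (fun ω => (Z ω, D ω)) W ℙ w))
          ∂(Measure.map W ℙ)) = 0 →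
      ℙ {ω | (Z ω, D ω) ∈ B} = 0) :
    ∀ f : ℝ × ℝ → ℝ, Measurable f → (∃ M, ∀ p, |f p| ≤ M) →
      (ℙ[fun ω => f (Z ω, D ω) * ωf (Z ω) (D ω) (W ω)
          | MeasurableSpace.comap W inferInstance] =ᵐ[ℙ] 0) →
      (fun ω => f (Z ω, D ω)) =ᵐ[ℙ] 0 := by
  rintro f hf ⟨Mf, hMf⟩ hcond
  obtain ⟨Mω, hMω⟩ := hωbdd
  have hF : Measurable fun q : ℝ × ℝ × ℝ => f q.2 * ωf q.2.1 q.2.2 q.1 :=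
    (hf.comp measurable_snd).mul (hωmeas.comp (measurable_snd.fst.prodMk
      (measurable_snd.snd.prodMk measurable_fst)))
  have hF_bdd : ∀ z d w, ‖f (z, d) * ωf z d w‖ ≤ Mf * Mω := fun z d w => by
    rw [Real.norm_eq_abs, abs_mul, abs_of_nonneg (hωnn z d w)]
    exact mul_le_mul (hMf _) (hMω z d w) (hωnn z d w) ((abs_nonneg _).trans (hMf (z, d)))
  have hF_int : Integrable (fun ω => f (Z ω, D ω) * ωf (Z ω) (D ω) (W ω)) ℙ :=
    .of_bound (hF.comp (hW.prodMk (hZ.prodMk hD))).aestronglyMeasurable (Mf * Mω)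
      (.of_forall fun ω => hF_bdd _ _ _)
  have hmoment := ae_integral_condDistrib_eq_zero_of_condExp_eq_zero hW (hZ.prodMk hD)
    hF.stronglyMeasurable hF_int hcond
  exact ae_iff.2 <| habscont _ (hf (measurableSet_singleton 0)).compl <|
    hcomplete f hf ⟨Mf, hMf⟩ hmoment

/-- Sufficient conditions for the bounded strong completeness assumption (paper's
appendix lemma in Section S.1.6). Here `κ` is the conditional distribution of `(Z,D)`
given `W`, and the reweighted distribution `ν` is expressed via its defining formula
`ν(B) = ∫ [∫_B ω dκ(w)] / [∫ ω dκ(w)] dμ_W(w)`. -/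
theorem bounded_completeness_sufficient_conditions
    {Ω : Type*} [MeasureSpace Ω] [IsProbabilityMeasure (ℙ : Measure Ω)]
    (Z D W : Ω → ℝ)
    (hZ : Measurable Z) (hD : Measurable D) (hW : Measurable W)
    (hD01 : ∀ ω, D ω = 0 ∨ D ω = 1)
    (ωf : ℝ → ℝ → ℝ → ℝ)
    (hωmeas : Measurable fun p : ℝ × ℝ × ℝ => ωf p.1 p.2.1 p.2.2)
    (hωnn : ∀ z d w, 0 ≤ ωf z d w)
    (hωbdd : ∃ M, ∀ z d w, ωf z d w ≤ M)
    (hωpos : ∀ᵐ w ∂(Measure.map W ℙ),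
      0 < ∫ p : ℝ × ℝ, ωf p.1 p.2 w ∂(condDistrib (fun ω => (Z ω, D ω)) W ℙ w))
    -- (i) bounded completeness for the reweighted family
    (hcomplete : ∀ g : ℝ × ℝ → ℝ, Measurable g → (∃ M, ∀ p, |g p| ≤ M) →
      (∀ᵐ w ∂(Measure.map W ℙ),
        (∫ p : ℝ × ℝ, g p * ωf p.1 p.2 w ∂(condDistrib (fun ω => (Z ω, D ω)) W ℙ w)) = 0) →
      (∫⁻ w, (∫⁻ p in {p : ℝ × ℝ | g p ≠ 0}, ENNReal.ofReal (ωf p.1 p.2 w)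
                ∂(condDistrib (fun ω => (Z ω, D ω)) W ℙ w))
            / (∫⁻ p : ℝ × ℝ, ENNReal.ofReal (ωf p.1 p.2 w)
                ∂(condDistrib (fun ω => (Z ω, D ω)) W ℙ w))
          ∂(Measure.map W ℙ)) = 0)
    -- (ii) absolute continuity of the law of (Z,D) w.r.t. ν
    (habscont : ∀ B : Set (ℝ × ℝ), MeasurableSet B →
      (∫⁻ w, (∫⁻ p in B, ENNReal.ofReal (ωf p.1 p.2 w)
                ∂(condDistrib (fun ω => (Z ω, D ω)) W ℙ w))
            / (∫⁻ p : ℝ × ℝ, ENNReal.ofReal (ωf p.1 p.2 w)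
                ∂(condDistrib (fun ω => (Z ω, D ω)) W ℙ w))
          ∂(Measure.map W ℙ)) = 0 →
      ℙ {ω | (Z ω, D ω) ∈ B} = 0) :
    ∀ f : ℝ × ℝ → ℝ, Measurable f → (∃ M, ∀ p, |f p| ≤ M) →
      (ℙ[fun ω => f (Z ω, D ω) * ωf (Z ω) (D ω) (W ω)
          | MeasurableSpace.comap W inferInstance] =ᵐ[ℙ] 0) →
      (fun ω => f (Z ω, D ω)) =ᵐ[ℙ] 0 :=
  bounded_completeness_sufficient_conditions_general Z D W hZ hD hW ωf hωmeas hωnn hωbdd hcomplete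
    habscont
end

section
/- Threshold event identities (proved in the course of the paper's Theorem 3.1): under the nonseparable duration model, for every u ≥ 0 the following hold almost surely: 1{T ≤ φ₀(u)}·1{Z > T} = 1{U ≤ u}·1{Z > T}, and 1{T ≤ φ₁(Z,u)}·1{Z ≤ T} = 1{U ≤ u}·1{Z ≤ T}. -/
open MeasureTheory ProbabilityTheory Set

/-- Threshold event identities proved in the course of the paper's Theorem 3.1:
for every `u ≥ 0`, almost surely
`1{T ≤ φ₀(u)}·1{Z > T} = 1{U ≤ u}·1{Z > T}` and
`1{T ≤ φ₁(Z,u)}·1{Z ≤ T} = 1{U ≤ u}·1{Z ≤ T}`. -/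
theorem threshold_event_identities
    {Ω : Type*} [MeasureSpace Ω] [IsProbabilityMeasure (ℙ : Measure Ω)]
    (T Z U W : Ω → ℝ)
    (hT : Measurable T) (hZ : Measurable Z) (hU : Measurable U) (hW : Measurable W)
    (hTnn : ∀ ω, 0 ≤ T ω) (hZnn : ∀ ω, 0 ≤ Z ω) (hUnn : ∀ ω, 0 ≤ U ω)
    (φ0 φ0inv : ℝ → ℝ) (φ1 : ℝ → ℝ → ℝ)
    (hφ0mono : StrictMonoOn φ0 (Set.Ici 0))
    (hφ0nn : ∀ u, 0 ≤ u → 0 ≤ φ0 u)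
    (hφ0invnn : ∀ t, 0 ≤ t → 0 ≤ φ0inv t)
    (hφ0inv1 : ∀ u, 0 ≤ u → φ0inv (φ0 u) = u)
    (hφ0inv2 : ∀ t, 0 ≤ t → φ0 (φ0inv t) = t)
    (hφ1meas : Measurable fun p : ℝ × ℝ => φ1 p.1 p.2)
    (hφ1nn : ∀ z u, 0 ≤ z → 0 ≤ u → 0 ≤ φ1 z u)
    (hφ1mono : ∀ z, 0 ≤ z → StrictMonoOn (φ1 z) (Set.Ici 0))
    (hφ1fix : ∀ z, 0 ≤ z → φ1 z (φ0inv z) = z)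
    (hmodel : ∀ᵐ ω ∂ℙ, (φ0 (U ω) < Z ω → T ω = φ0 (U ω)) ∧
      (Z ω ≤ φ0 (U ω) → T ω = φ1 (Z ω) (U ω))) :
    ∀ u, 0 ≤ u →
      ∀ᵐ ω ∂ℙ,
        ((if T ω ≤ φ0 u then (1 : ℝ) else 0) * (if T ω < Z ω then (1 : ℝ) else 0)
            = (if U ω ≤ u then (1 : ℝ) else 0) * (if T ω < Z ω then (1 : ℝ) else 0)) ∧
        ((if T ω ≤ φ1 (Z ω) u then (1 : ℝ) else 0) * (if Z ω ≤ T ω then (1 : ℝ) else 0)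
            = (if U ω ≤ u then (1 : ℝ) else 0) * (if Z ω ≤ T ω then (1 : ℝ) else 0)) := by

  intro u hu
  filter_upwards [hmodel] with ω hω
  obtain ⟨h1, h2⟩ := hω
  constructor
  · by_cases hTZ : T ω < Z ω
    · simp only [if_pos hTZ, mul_one]
      -- show φ0 (U ω) < Z ω
      have hcase : φ0 (U ω) < Z ω := by
        by_contra hnot
        push_neg at hnot
        have hTe : T ω = φ1 (Z ω) (U ω) := h2 hnot
        have hZle : φ0inv (Z ω) ≤ U ω := by
          by_contra hlt
          push_neg at hlt
          have := hφ0mono (hUnn ω) (hφ0invnn _ (hZnn ω)) hlt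
          rw [hφ0inv2 _ (hZnn ω)] at this
          exact absurd hnot (not_le.mpr this)
        have : Z ω ≤ T ω := by
          rw [hTe]
          have h := ((hφ1mono (Z ω) (hZnn ω)).le_iff_le (hφ0invnn _ (hZnn ω)) (hUnn ω)).mpr hZle
          rwa [hφ1fix (Z ω) (hZnn ω)] at h
        exact absurd hTZ (not_lt.mpr this)
      have hTe := h1 hcase
      rw [hTe]
      have : φ0 (U ω) ≤ φ0 u ↔ U ω ≤ u :=
        hφ0mono.le_iff_le (hUnn ω) hu
      simp [this]
    · simp [if_neg hTZ]
  · by_cases hTZ : Z ω ≤ T ω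
    · simp only [if_pos hTZ, mul_one]
      have hcase : Z ω ≤ φ0 (U ω) := by
        by_contra hnot
        push_neg at hnot
        have hTe := h1 hnot
        exact absurd hTZ (not_le.mpr (hTe ▸ hnot))
      have hTe := h2 hcase
      rw [hTe]
      have : φ1 (Z ω) (U ω) ≤ φ1 (Z ω) u ↔ U ω ≤ u :=
        (hφ1mono (Z ω) (hZnn ω)).le_iff_le (hUnn ω) hu
      simp [this]
    · simp [if_neg hTZ]
end

section
/- Disintegration formula for the not-yet-treated subdistribution (unconditional form of the display proved in the paper's Lemma S.3(i)): under the nonseparable duration model with U unit exponential, letting κ denote the conditional distribution of Z given U, for every t ≥ 0: P(T ≤ t and Z > T) = ∫₀^{φ₀⁻¹(t)} κ(u)( (φ₀(u), ∞) ) · exp(−u) du. -/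
/-!
Off the event `{Z ≤ φ₀(U)}` the duration is `φ₀(U)`, while on it
`T = φ₁(Z, U) ≥ φ₁(Z, φ₀⁻¹(Z)) = Z`.
Hence `{T ≤ t, T < Z} = {U ≤ φ₀⁻¹(t), φ₀(U) < Z}` almost surely. Disintegrating the joint law of
`(U, Z)` as `law(U) ⊗ κ` turns its probability into `∫_{U ≤ φ₀⁻¹(t)} κ(u)((φ₀(u), ∞)) dlaw(U)`,
and `law(U)` is the exponential distribution, with density `e^{-u}` on `[0, ∞)`.
-/

open MeasureTheory ProbabilityTheory Set

lemma map_eq_expMeasure_of_measure_le {Ω : Type*} [MeasurableSpace Ω] {μ : Measure Ω}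
    [IsProbabilityMeasure μ] {U : Ω → ℝ} (hU : Measurable U) (hUnn : ∀ ω, 0 ≤ U ω)
    {r : ℝ} (hr : 0 < r)
    (hcdf : ∀ u, 0 ≤ u → μ {ω | U ω ≤ u} = ENNReal.ofReal (1 - Real.exp (-(r * u)))) :
    μ.map U = expMeasure r := by
  have := isProbabilityMeasure_expMeasure hr
  refine Measure.ext_of_Iic _ _ fun u => ?_
  rw [Measure.map_apply hU measurableSet_Iic, ← ofReal_cdf, cdf_expMeasure_eq hr]
  split_ifs with hu
  · exact hcdf u hu
  · have : U ⁻¹' Iic u = ∅ :=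
      eq_empty_of_forall_notMem fun ω hω => hu ((hUnn ω).trans hω)
    rw [this, measure_empty, ENNReal.ofReal_zero]

lemma setLIntegral_Iic_expMeasure {h : ℝ → ENNReal} (hh : Measurable h) (r : ℝ) {a : ℝ}
    (ha : 0 ≤ a) :
    ∫⁻ u in Iic a, h u ∂expMeasure r
      = ∫⁻ u in Ioc 0 a, ENNReal.ofReal (r * Real.exp (-(r * u))) * h u := by
  rw [expMeasure, gammaMeasure, setLIntegral_withDensity_eq_setLIntegral_mul _
    (f := gammaPDF 1 r) (measurable_gammaPDFReal 1 r).ennreal_ofReal hh measurableSet_Iic,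
    lintegral_Iic_eq_lintegral_Iio_add_Icc _ ha, setLIntegral_congr Ioc_ae_eq_Icc]
  have hneg : ∫⁻ u in Iio 0, (gammaPDF 1 r * h) u = 0 :=
    setLIntegral_eq_zero measurableSet_Iio fun u hu => by
      simp [gammaPDF_of_neg (mem_Iio.mp hu)]
  rw [hneg, zero_add]
  refine setLIntegral_congr_fun measurableSet_Icc fun u hu => ?_
  exact congrArg (· * h u) (exponentialPDF_of_nonneg hu.1)

lemma toReal_setLIntegral_Ioc_eq_intervalIntegral {f : ℝ → ENNReal} (hf : Measurable f)
    (hfin : ∀ u, f u ≠ ⊤) {a : ℝ} (ha : 0 ≤ a) :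
    (∫⁻ u in Ioc 0 a, f u).toReal = ∫ u in 0..a, (f u).toReal := by
  rw [intervalIntegral.integral_of_le ha,
    integral_toReal hf.aemeasurable (Filter.Eventually.of_forall fun u => (hfin u).lt_top)]

lemma measure_mem_and_lt_eq_setLIntegral_condDistrib {Ω β : Type*} [MeasurableSpace Ω]
    [MeasurableSpace β] {μ : Measure Ω} [IsFiniteMeasure μ] {X : Ω → β} {Y : Ω → ℝ}
    (hX : Measurable X) (hY : Measurable Y) {g : β → ℝ} (hg : Measurable g) {A : Set β}
    (hA : MeasurableSet A) :
    μ {ω | X ω ∈ A ∧ g (X ω) < Y ω}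
      = ∫⁻ x in A, condDistrib Y X μ x (Ioi (g x)) ∂μ.map X := by
  have hS : MeasurableSet {p : β × ℝ | p.1 ∈ A ∧ g p.1 < p.2} :=
    (measurable_fst hA).inter (measurableSet_lt (hg.comp measurable_fst) measurable_snd)
  change μ ((fun ω => (X ω, Y ω)) ⁻¹' {p | p.1 ∈ A ∧ g p.1 < p.2}) = _
  rw [← lintegral_indicator hA, ← Measure.map_apply (hX.prodMk hY) hS,
    ← compProd_map_condDistrib hY.aemeasurable, Measure.compProd_apply hS]
  refine lintegral_congr fun x => ?_
  by_cases hx : x ∈ A <;> simp [hx, Set.indicator, Ioi]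

lemma not_yet_treated_iff {φ0 φ0inv : ℝ → ℝ} {φ1 : ℝ → ℝ → ℝ}
    (hφ0mono : StrictMonoOn φ0 (Ici 0))
    (hφ0invnn : ∀ t, 0 ≤ t → 0 ≤ φ0inv t) (hφ0inv : ∀ t, 0 ≤ t → φ0 (φ0inv t) = t)
    (hφ1mono : ∀ z, 0 ≤ z → StrictMonoOn (φ1 z) (Ici 0))
    (hφ1fix : ∀ z, 0 ≤ z → φ1 z (φ0inv z) = z)
    {τ z u t : ℝ} (hz : 0 ≤ z) (hu : 0 ≤ u) (ht : 0 ≤ t)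
    (hτ0 : φ0 u < z → τ = φ0 u) (hτ1 : z ≤ φ0 u → τ = φ1 z u) :
    τ ≤ t ∧ τ < z ↔ u ≤ φ0inv t ∧ φ0 u < z := by
  have le_iff : ∀ s, 0 ≤ s → (φ0 u ≤ s ↔ u ≤ φ0inv s) := fun s hs => by
    conv_lhs => rw [← hφ0inv s hs]
    exact hφ0mono.le_iff_le hu (hφ0invnn s hs)
  have iff_le : ∀ s, 0 ≤ s → (s ≤ φ0 u ↔ φ0inv s ≤ u) := fun s hs => by
    conv_lhs => rw [← hφ0inv s hs]
    exact hφ0mono.le_iff_le (hφ0invnn s hs) hu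
  rcases lt_or_ge (φ0 u) z with huntreated | htreated
  · rw [hτ0 huntreated, le_iff t ht]
  · have hzτ : z ≤ τ := calc
      z = φ1 z (φ0inv z) := (hφ1fix z hz).symm
      _ ≤ φ1 z u := (hφ1mono z hz).monotoneOn (hφ0invnn z hz) hu ((iff_le z hz).mp htreated)
      _ = τ := (hτ1 htreated).symm
    simp [hzτ.not_gt, htreated.not_gt]

theorem disintegration_not_yet_treated_general
    {Ω : Type*} [MeasureSpace Ω] [IsProbabilityMeasure (ℙ : Measure Ω)]
    (T Z U : Ω → ℝ)
    (hZ : Measurable Z) (hU : Measurable U)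
    (hZnn : ∀ ω, 0 ≤ Z ω) (hUnn : ∀ ω, 0 ≤ U ω)
    (φ0 φ0inv : ℝ → ℝ) (φ1 : ℝ → ℝ → ℝ)
    (hφ0mono : StrictMonoOn φ0 (Set.Ici 0))
    (hφ0invnn : ∀ t, 0 ≤ t → 0 ≤ φ0inv t)
    (hφ0inv2 : ∀ t, 0 ≤ t → φ0 (φ0inv t) = t)
    (hφ1mono : ∀ z, 0 ≤ z → StrictMonoOn (φ1 z) (Set.Ici 0))
    (hφ1fix : ∀ z, 0 ≤ z → φ1 z (φ0inv z) = z)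
    (hmodel : ∀ᵐ ω ∂ℙ, (φ0 (U ω) < Z ω → T ω = φ0 (U ω)) ∧
      (Z ω ≤ φ0 (U ω) → T ω = φ1 (Z ω) (U ω)))
    (hUexp : ∀ u, 0 ≤ u → ℙ {ω | U ω ≤ u} = ENNReal.ofReal (1 - Real.exp (-u))) :
    ∀ t, 0 ≤ t →
      (ℙ {ω | T ω ≤ t ∧ T ω < Z ω}).toReal
        = ∫ u in (0:ℝ)..(φ0inv t),
            (condDistrib Z U ℙ u (Set.Ioi (φ0 u))).toReal * Real.exp (-u) := by
  intro t ht
  -- `φ0` is only known to be monotone on `[0, ∞)`; this extension is monotone, hence measurable.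
  set g : ℝ → ℝ := fun u => φ0 (max u 0)
  have hg : Measurable g := Monotone.measurable fun x y hxy =>
    hφ0mono.monotoneOn (le_max_right x 0) (le_max_right y 0) (max_le_max_right 0 hxy)
  have hevent : ℙ {ω | T ω ≤ t ∧ T ω < Z ω} = ℙ {ω | U ω ∈ Iic (φ0inv t) ∧ g (U ω) < Z ω} := by
    refine measure_congr (hmodel.mono fun ω hω => propext ?_)
    change _ ↔ U ω ≤ φ0inv t ∧ φ0 (max (U ω) 0) < Z ω
    rw [max_eq_left (hUnn ω)]
    exact not_yet_treated_iff hφ0mono hφ0invnn hφ0inv2 hφ1mono hφ1fix (hZnn ω) (hUnn ω) ht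
      hω.1 hω.2
  have hlaw : Measure.map U ℙ = expMeasure 1 :=
    map_eq_expMeasure_of_measure_le hU hUnn one_pos (by simpa only [one_mul] using hUexp)
  have hκ : Measurable fun u => condDistrib Z U ℙ u (Ioi (g u)) :=
    (condDistrib Z U ℙ).measurable_kernel_prodMk_left
      (measurableSet_lt (hg.comp measurable_fst) measurable_snd)
  rw [hevent, measure_mem_and_lt_eq_setLIntegral_condDistrib hU hZ hg measurableSet_Iic, hlaw,
    setLIntegral_Iic_expMeasure hκ 1 (hφ0invnn t ht),
    toReal_setLIntegral_Ioc_eq_intervalIntegral (by fun_prop) (fun u => by finiteness)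
      (hφ0invnn t ht)]
  refine intervalIntegral.integral_congr fun u hu => ?_
  have hu0 : 0 ≤ u := (uIcc_of_le (hφ0invnn t ht) ▸ hu).1
  rw [ENNReal.toReal_mul, ENNReal.toReal_ofReal (by positivity), mul_comm]
  simp only [g, one_mul, max_eq_left hu0]

/-- Disintegration formula for the not-yet-treated subdistribution (unconditional form
of the display in the paper's Lemma S.3(i)): with `κ` the conditional distribution of
`Z` given `U` and `U` unit exponential,
`P(T ≤ t, Z > T) = ∫₀^{φ₀⁻¹(t)} κ(u)((φ₀(u),∞)) e^{−u} du`. -/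
theorem disintegration_not_yet_treated
    {Ω : Type*} [MeasureSpace Ω] [IsProbabilityMeasure (ℙ : Measure Ω)]
    (T Z U W : Ω → ℝ)
    (hT : Measurable T) (hZ : Measurable Z) (hU : Measurable U) (hW : Measurable W)
    (hTnn : ∀ ω, 0 ≤ T ω) (hZnn : ∀ ω, 0 ≤ Z ω) (hUnn : ∀ ω, 0 ≤ U ω)
    (φ0 φ0inv : ℝ → ℝ) (φ1 : ℝ → ℝ → ℝ)
    (hφ0mono : StrictMonoOn φ0 (Set.Ici 0))
    (hφ0nn : ∀ u, 0 ≤ u → 0 ≤ φ0 u)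
    (hφ0invnn : ∀ t, 0 ≤ t → 0 ≤ φ0inv t)
    (hφ0inv1 : ∀ u, 0 ≤ u → φ0inv (φ0 u) = u)
    (hφ0inv2 : ∀ t, 0 ≤ t → φ0 (φ0inv t) = t)
    (hφ1meas : Measurable fun p : ℝ × ℝ => φ1 p.1 p.2)
    (hφ1nn : ∀ z u, 0 ≤ z → 0 ≤ u → 0 ≤ φ1 z u)
    (hφ1mono : ∀ z, 0 ≤ z → StrictMonoOn (φ1 z) (Set.Ici 0))
    (hφ1fix : ∀ z, 0 ≤ z → φ1 z (φ0inv z) = z)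
    (hmodel : ∀ᵐ ω ∂ℙ, (φ0 (U ω) < Z ω → T ω = φ0 (U ω)) ∧
      (Z ω ≤ φ0 (U ω) → T ω = φ1 (Z ω) (U ω)))
    (hUexp : ∀ u, 0 ≤ u → ℙ {ω | U ω ≤ u} = ENNReal.ofReal (1 - Real.exp (-u))) :
    ∀ t, 0 ≤ t →
      (ℙ {ω | T ω ≤ t ∧ T ω < Z ω}).toReal
        = ∫ u in (0:ℝ)..(φ0inv t),
            (condDistrib Z U ℙ u (Set.Ioi (φ0 u))).toReal * Real.exp (-u) :=
  disintegration_not_yet_treated_general T Z U hZ hU hZnn hUnn φ0 φ0inv φ1 hφ0mono hφ0invnn hφ0inv2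
    hφ1mono hφ1fix hmodel hUexp
end

section
/- Disintegration formula for the treated subdistribution (unconditional form of the display proved in the paper's Lemma S.3(ii)): under the nonseparable duration model with U unit exponential, letting κ denote the conditional distribution of Z given U, for every v ≥ 0: P(T ≤ φ₁(Z,v) and Z ≤ T) = ∫₀^{v} κ(u)( [0, φ₀(u)] ) · exp(−u) du. -/
/-!
On the event `Z ≤ T` the model is in its treated branch, where `T = φ1(Z, U)` with `φ1(Z, ·)`
strictly increasing and `φ1(Z, φ0⁻¹(Z)) = Z`; hence `{T ≤ φ1(Z, v), Z ≤ T}` is almost surely the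
event `{Z ≤ φ0(U), U ≤ v}`, which only involves the pair `(U, Z)`. Disintegrating the law of
`(U, Z)` as `law(U) ⊗ κ` expresses its probability as `∫_{U ≤ v} κ(u)([0, φ0(u)]) dlaw(U)`, and
the unit exponential law of `U` has density `exp(-u)` on `[0, ∞)`.
-/

open MeasureTheory ProbabilityTheory Set
open scoped ENNReal

theorem treated_event_iff {φ₀ g : ℝ → ℝ} {a t u v z : ℝ}
    (hφ₀ : StrictMonoOn φ₀ (Ici 0)) (hg : StrictMonoOn g (Ici 0))
    (ha : 0 ≤ a) (hφ₀a : φ₀ a = z) (hga : g a = z) (hu : 0 ≤ u) (hv : 0 ≤ v)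
    (hcensored : φ₀ u < z → t = φ₀ u) (htreated : z ≤ φ₀ u → t = g u) :
    t ≤ g v ∧ z ≤ t ↔ z ≤ φ₀ u ∧ u ≤ v := by
  constructor
  · rintro ⟨htv, hzt⟩
    have hzu : z ≤ φ₀ u := by
      by_contra! h
      exact (hzt.trans_eq (hcensored h)).not_gt h
    rw [htreated hzu, hg.le_iff_le hu hv] at htv
    exact ⟨hzu, htv⟩
  · rintro ⟨hzu, huv⟩
    have hau : a ≤ u := (hφ₀.le_iff_le ha hu).1 (hφ₀a.trans_le hzu)
    rw [htreated hzu, hg.le_iff_le hu hv, ← hga, hg.le_iff_le ha hu]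
    exact ⟨huv, hau⟩

theorem measure_pair_mem_eq_setLIntegral_condDistrib {Ω α β : Type*} [MeasurableSpace Ω]
    [MeasurableSpace α] [MeasurableSpace β] [StandardBorelSpace β] [Nonempty β]
    {μ : Measure Ω} [IsFiniteMeasure μ] {X : Ω → α} {Y : Ω → β}
    (hX : Measurable X) (hY : Measurable Y) {s : Set α} (hs : MeasurableSet s)
    {t : Set (α × β)} (ht : MeasurableSet t) :
    μ {ω | X ω ∈ s ∧ (X ω, Y ω) ∈ t}
      = ∫⁻ x in s, condDistrib Y X μ x (Prod.mk x ⁻¹' t) ∂μ.map X := by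
  have hst : MeasurableSet (Prod.fst ⁻¹' s ∩ t) := (measurable_fst hs).inter ht
  rw [← lintegral_indicator hs]
  calc μ {ω | X ω ∈ s ∧ (X ω, Y ω) ∈ t}
      = μ.map (fun ω ↦ (X ω, Y ω)) (Prod.fst ⁻¹' s ∩ t) := by
        rw [Measure.map_apply (hX.prodMk hY) hst]; rfl
    _ = _ := by
        rw [← compProd_map_condDistrib hY.aemeasurable, Measure.compProd_apply hst]
        congr 1 with x
        by_cases hx : x ∈ s
        · rw [indicator_of_mem hx]
          congr 1 with y
          simp [hx]
        · rw [indicator_of_notMem hx, ← measure_empty (μ := condDistrib Y X μ x)]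
          congr 1 with y
          simp [hx]

theorem map_eq_expMeasure_one {Ω : Type*} [MeasurableSpace Ω] {μ : Measure Ω}
    [IsProbabilityMeasure μ] {U : Ω → ℝ} (hU : Measurable U)
    (hUexp : ∀ u, 0 ≤ u → μ {ω | U ω ≤ u} = ENNReal.ofReal (1 - Real.exp (-u))) :
    μ.map U = expMeasure 1 := by
  have := Measure.isProbabilityMeasure_map (μ := μ) hU.aemeasurable
  have := isProbabilityMeasure_expMeasure (r := 1) one_pos
  refine Measure.ext_of_Iic _ _ fun a ↦ ?_
  rw [Measure.map_apply hU measurableSet_Iic, ← ofReal_cdf, cdf_expMeasure_eq one_pos, one_mul]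
  split_ifs with ha
  · exact hUexp a ha
  · rw [ENNReal.ofReal_zero, ← nonpos_iff_eq_zero]
    calc μ {ω | U ω ≤ a} ≤ μ {ω | U ω ≤ 0} :=
          measure_mono fun ω (hω : U ω ≤ a) ↦ hω.trans (not_le.1 ha).le
      _ = 0 := by simp [hUexp 0 le_rfl]

theorem expMeasure_one_Iic_zero : expMeasure 1 (Iic 0) = 0 := by
  have := isProbabilityMeasure_expMeasure (r := 1) one_pos
  rw [← ofReal_cdf, cdf_expMeasure_eq one_pos]
  simp

theorem toReal_setLIntegral_Iic_expMeasure_one {g : ℝ → ℝ≥0∞} (hg : Measurable g)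
    (hg_ne_top : ∀ u, g u ≠ ∞) {v : ℝ} (hv : 0 ≤ v) :
    (∫⁻ u in Iic v, g u ∂expMeasure 1).toReal = ∫ u in 0..v, (g u).toReal * Real.exp (-u) := by
  have hIoc : Iic v =ᵐ[expMeasure 1] Ioc 0 v := by
    refine (ae_eq_set.2 ⟨measure_mono_null (fun u hu ↦ ?_) expMeasure_one_Iic_zero, by simp⟩)
    simp only [mem_sdiff, mem_Iic, mem_Ioc, not_and, not_le] at hu ⊢
    by_contra! h
    exact (hu.2 h).not_ge hu.1
  have hdensity : expMeasure 1 = volume.withDensity (exponentialPDF 1) := rfl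
  have hpdf : Measurable (exponentialPDF 1) :=
    ENNReal.measurable_ofReal.comp (measurable_exponentialPDFReal 1)
  rw [setLIntegral_congr hIoc, hdensity,
    setLIntegral_withDensity_eq_setLIntegral_mul _ hpdf hg measurableSet_Ioc,
    ← integral_toReal (hpdf.mul hg).aemeasurable
      (.of_forall fun u ↦ ENNReal.mul_lt_top ENNReal.ofReal_lt_top (hg_ne_top u).lt_top),
    intervalIntegral.integral_of_le hv]
  refine setIntegral_congr_fun measurableSet_Ioc fun u hu ↦ ?_
  simp [exponentialPDF_of_nonneg hu.1.le, (Real.exp_pos _).le, mul_comm]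

theorem disintegration_treated_general
    {Ω : Type*} [MeasureSpace Ω] [IsProbabilityMeasure (ℙ : Measure Ω)]
    (T Z U : Ω → ℝ)
    (hZ : Measurable Z) (hU : Measurable U)
    (hZnn : ∀ ω, 0 ≤ Z ω) (hUnn : ∀ ω, 0 ≤ U ω)
    (φ0 φ0inv : ℝ → ℝ) (φ1 : ℝ → ℝ → ℝ)
    (hφ0mono : StrictMonoOn φ0 (Set.Ici 0))
    (hφ0invnn : ∀ t, 0 ≤ t → 0 ≤ φ0inv t)
    (hφ0inv2 : ∀ t, 0 ≤ t → φ0 (φ0inv t) = t)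
    (hφ1mono : ∀ z, 0 ≤ z → StrictMonoOn (φ1 z) (Set.Ici 0))
    (hφ1fix : ∀ z, 0 ≤ z → φ1 z (φ0inv z) = z)
    (hmodel : ∀ᵐ ω ∂ℙ, (φ0 (U ω) < Z ω → T ω = φ0 (U ω)) ∧
      (Z ω ≤ φ0 (U ω) → T ω = φ1 (Z ω) (U ω)))
    (hUexp : ∀ u, 0 ≤ u → ℙ {ω | U ω ≤ u} = ENNReal.ofReal (1 - Real.exp (-u))) :
    ∀ t, 0 ≤ t →
    ∀ v, 0 ≤ v →
      (ℙ {ω | T ω ≤ φ1 (Z ω) v ∧ Z ω ≤ T ω}).toReal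
        = ∫ u in (0:ℝ)..v,
            (condDistrib Z U ℙ u (Set.Icc 0 (φ0 u))).toReal * Real.exp (-u) := by
  intro _ _ v hv
  -- `φ0` is only monotone on `[0, ∞)`; extending it constantly to the left makes it measurable.
  set ψ : ℝ → ℝ := fun u ↦ φ0 (max u 0)
  have hψ : Measurable ψ := Monotone.measurable fun a b hab ↦
    hφ0mono.monotoneOn (le_max_right a 0) (le_max_right b 0) (max_le_max hab le_rfl)
  set S : Set (ℝ × ℝ) := {p | 0 ≤ p.2 ∧ p.2 ≤ ψ p.1}
  have hS : MeasurableSet S := (measurableSet_le measurable_const measurable_snd).inter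
    (measurableSet_le measurable_snd (hψ.comp measurable_fst))
  have hevent : ℙ {ω | T ω ≤ φ1 (Z ω) v ∧ Z ω ≤ T ω} = ℙ {ω | U ω ∈ Iic v ∧ (U ω, Z ω) ∈ S} := by
    refine measure_congr (Filter.eventuallyEq_set.2 ?_)
    filter_upwards [hmodel] with ω ⟨hcensored, htreated⟩
    rw [treated_event_iff hφ0mono (hφ1mono _ (hZnn ω)) (hφ0invnn _ (hZnn ω))
      (hφ0inv2 _ (hZnn ω)) (hφ1fix _ (hZnn ω)) (hUnn ω) hv hcensored htreated]
    simp [S, ψ, max_eq_left (hUnn ω), hZnn ω, and_comm]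
  rw [hevent, measure_pair_mem_eq_setLIntegral_condDistrib hU hZ measurableSet_Iic hS,
    map_eq_expMeasure_one hU hUexp, toReal_setLIntegral_Iic_expMeasure_one
      (Kernel.measurable_kernel_prodMk_left hS) (fun _ ↦ measure_ne_top _ _) hv]
  refine intervalIntegral.integral_congr fun u hu ↦ ?_
  have hu0 : 0 ≤ u := (uIcc_of_le hv ▸ hu).1
  simp [S, ψ, max_eq_left hu0, Icc]

/-- Disintegration formula for the treated subdistribution (unconditional form of the
display in the paper's Lemma S.3(ii)): with `κ` the conditional distribution of `Z`
given `U` and `U` unit exponential,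
`P(T ≤ φ₁(Z,v), Z ≤ T) = ∫₀^v κ(u)([0,φ₀(u)]) e^{−u} du`. -/
theorem disintegration_treated
    {Ω : Type*} [MeasureSpace Ω] [IsProbabilityMeasure (ℙ : Measure Ω)]
    (T Z U W : Ω → ℝ)
    (hT : Measurable T) (hZ : Measurable Z) (hU : Measurable U) (hW : Measurable W)
    (hTnn : ∀ ω, 0 ≤ T ω) (hZnn : ∀ ω, 0 ≤ Z ω) (hUnn : ∀ ω, 0 ≤ U ω)
    (φ0 φ0inv : ℝ → ℝ) (φ1 : ℝ → ℝ → ℝ)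
    (hφ0mono : StrictMonoOn φ0 (Set.Ici 0))
    (hφ0nn : ∀ u, 0 ≤ u → 0 ≤ φ0 u)
    (hφ0invnn : ∀ t, 0 ≤ t → 0 ≤ φ0inv t)
    (hφ0inv1 : ∀ u, 0 ≤ u → φ0inv (φ0 u) = u)
    (hφ0inv2 : ∀ t, 0 ≤ t → φ0 (φ0inv t) = t)
    (hφ1meas : Measurable fun p : ℝ × ℝ => φ1 p.1 p.2)
    (hφ1nn : ∀ z u, 0 ≤ z → 0 ≤ u → 0 ≤ φ1 z u)
    (hφ1mono : ∀ z, 0 ≤ z → StrictMonoOn (φ1 z) (Set.Ici 0))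
    (hφ1fix : ∀ z, 0 ≤ z → φ1 z (φ0inv z) = z)
    (hmodel : ∀ᵐ ω ∂ℙ, (φ0 (U ω) < Z ω → T ω = φ0 (U ω)) ∧
      (Z ω ≤ φ0 (U ω) → T ω = φ1 (Z ω) (U ω)))
    (hUexp : ∀ u, 0 ≤ u → ℙ {ω | U ω ≤ u} = ENNReal.ofReal (1 - Real.exp (-u))) :
    ∀ t, 0 ≤ t →
    ∀ v, 0 ≤ v →
      (ℙ {ω | T ω ≤ φ1 (Z ω) v ∧ Z ω ≤ T ω}).toReal
        = ∫ u in (0:ℝ)..v,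
            (condDistrib Z U ℙ u (Set.Icc 0 (φ0 u))).toReal * Real.exp (-u) :=
  disintegration_treated_general T Z U hZ hU hZnn hUnn φ0 φ0inv φ1 hφ0mono hφ0invnn hφ0inv2 hφ1mono
    hφ1fix hmodel hUexp
end
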